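/- arXiv:1611.08044 — 4 statements merged into one kernel-verified Lean document; each statement's English description precedes it below -/
import Mathlib

section
/- Let m ∈ ℕ, let 𝓗 be a Hardy field, and let f, g ∈ 𝓗 satisfy |f(t)| ≺ |g(t)| ≺ |f(t)|·log^m(t) and |log(|f(t)|)| ≻ log₂(t). Then f'(t)/f(t) ∼ g'(t)/g(t), i.e. the quotient (g'(t)/g(t)) / (f'(t)/f(t)) tends to 1 as t → ∞. -/
open Filter Real
open scoped Classical

noncomputable section

/-- `Prec f g` formalizes `f(t) ≺ g(t)`: `g(t)/f(t) → ∞` as `t → ∞`. -/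
def Prec (f g : ℝ → ℝ) : Prop := Tendsto (fun t => g t / f t) atTop atTop

/-- `Ll f g` formalizes `f(t) ≪ g(t)`: there are `C > 0` and `t₀ ≥ 1` with
`f(t) ≤ C·g(t)` for all `t ≥ t₀`. -/
def Ll (f g : ℝ → ℝ) : Prop := ∃ C : ℝ, 0 < C ∧ ∃ t₀ : ℝ, 1 ≤ t₀ ∧ ∀ t ≥ t₀, f t ≤ C * g t

/-- the iterated logarithm `log₂(t) = log log t`. -/
def log2 (t : ℝ) : ℝ := Real.log (Real.log t)

/-- the iterated logarithm `log₄(t) = log log log log t`. -/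
def log4 (t : ℝ) : ℝ := Real.log (Real.log (Real.log (Real.log t)))

/-- A Hardy field: a set of (germs at `+∞` of) eventually smooth real functions,
invariant under germ equivalence at `+∞`, forming a subring of the ring of germs that is
a field and is closed under differentiation. -/
structure HardyField where
  carrier : Set (ℝ → ℝ)
  germ_closed : ∀ f g : ℝ → ℝ, f =ᶠ[atTop] g → f ∈ carrier → g ∈ carrier
  eventually_smooth : ∀ f ∈ carrier, ∀ᶠ t in atTop, ∀ n : ℕ, ContDiffAt ℝ n f t
  zero_mem : (0 : ℝ → ℝ) ∈ carrier
  one_mem : (1 : ℝ → ℝ) ∈ carrier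
  add_mem : ∀ f ∈ carrier, ∀ g ∈ carrier, f + g ∈ carrier
  neg_mem : ∀ f ∈ carrier, -f ∈ carrier
  mul_mem : ∀ f ∈ carrier, ∀ g ∈ carrier, f * g ∈ carrier
  inv_mem : ∀ f ∈ carrier, ¬ f =ᶠ[atTop] (0 : ℝ → ℝ) →
    ∃ g ∈ carrier, f * g =ᶠ[atTop] (1 : ℝ → ℝ)
  deriv_mem : ∀ f ∈ carrier, deriv f ∈ carrier

/-- Condition (A): `log(t)·log₄(t) ≺ f(t)`. -/
def CondA (f : ℝ → ℝ) : Prop := Prec (fun t => Real.log t * log4 t) f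

/-- Condition (B): there is `j ∈ ℕ`, `j ≥ 1`, with `t^(j-1) ≺ f(t) ≺ t^j`. -/
def CondB (f : ℝ → ℝ) : Prop :=
  ∃ j : ℕ, 1 ≤ j ∧ Prec (fun t => t ^ (j - 1)) f ∧ Prec f (fun t => t ^ j)

/-- The natural density of `A ⊆ ℕ` exists and equals `L`. -/
def natDensityIs (A : Set ℕ) (L : ℝ) : Prop :=
  Tendsto (fun N : ℕ => (((Finset.Icc 1 N).filter fun n => n ∈ A).card : ℝ) / N)
    atTop (nhds L)

/-- `e(x) = e^{2πix}`. -/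
def e (x : ℝ) : ℂ := Complex.exp (2 * Real.pi * Complex.I * x)

/-- The value `ζ(m) = ∑_{n ≥ 1} 1/n^m` of the Riemann zeta function at a natural number `m`. -/
def zetaNat (m : ℕ) : ℝ := ∑' n : ℕ, (1 : ℝ) / ((n : ℝ) + 1) ^ m

namespace HardyAux

open MeasureTheory

variable {𝓗 : HardyField}

lemma sub_mem {f g : ℝ → ℝ} (hf : f ∈ 𝓗.carrier) (hg : g ∈ 𝓗.carrier) :
    (fun t => f t - g t) ∈ 𝓗.carrier := by
  have h := 𝓗.add_mem f hf (-g) (𝓗.neg_mem g hg)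
  exact 𝓗.germ_closed _ _ (Filter.EventuallyEq.of_eq (by funext t; simp [sub_eq_add_neg])) h

lemma nsmul_mem {f : ℝ → ℝ} (hf : f ∈ 𝓗.carrier) (n : ℕ) :
    (fun t => (n : ℝ) * f t) ∈ 𝓗.carrier := by
  induction n with
  | zero =>
      exact 𝓗.germ_closed _ _ (Filter.EventuallyEq.of_eq (by funext t; simp)) 𝓗.zero_mem
  | succ n ih =>
      have h := 𝓗.add_mem _ ih f hf
      exact 𝓗.germ_closed _ _ (Filter.EventuallyEq.of_eq (by funext t; push_cast; simp; ring)) h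

lemma sign_trichotomy {φ : ℝ → ℝ} (hφ : φ ∈ 𝓗.carrier) :
    (∀ᶠ t in atTop, φ t = 0) ∨ (∀ᶠ t in atTop, 0 < φ t) ∨ (∀ᶠ t in atTop, φ t < 0) := by
  by_cases h0 : ∀ᶠ t in atTop, φ t = 0
  · exact Or.inl h0
  · have hne : ¬ φ =ᶠ[atTop] (0 : ℝ → ℝ) := by
      intro h; exact h0 (h.mono fun t ht => by simpa using ht)
    obtain ⟨ψ, _, hψ⟩ := 𝓗.inv_mem φ hφ hne
    have hφne : ∀ᶠ t in atTop, φ t ≠ 0 := by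
      filter_upwards [hψ] with t ht h
      rw [Pi.mul_apply] at ht; simp [h] at ht
    have hcont : ∀ᶠ t in atTop, ContinuousAt φ t :=
      (𝓗.eventually_smooth φ hφ).mono fun t ht => (ht 0).continuousAt
    obtain ⟨T, hT⟩ := eventually_atTop.1 (hφne.and hcont)
    have key : ∀ a, T ≤ a → ∀ b, T ≤ b → φ a < 0 → 0 < φ b → False := by
      intro a ha b hb hfa hfb
      have hco : ContinuousOn φ (Set.uIcc a b) := by
        intro x hx
        have hx' : T ≤ x := le_trans (le_min ha hb) hx.1
        exact ((hT x hx').2).continuousWithinAt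
      have h0m : (0:ℝ) ∈ Set.uIcc (φ a) (φ b) := by
        rw [Set.mem_uIcc]; exact Or.inl ⟨hfa.le, hfb.le⟩
      obtain ⟨c, hc, hc0⟩ := intermediate_value_uIcc hco h0m
      exact (hT c (le_trans (le_min ha hb) hc.1)).1 hc0
    rcases lt_trichotomy (φ T) 0 with hT0 | hT0 | hT0
    · refine Or.inr (Or.inr (eventually_atTop.2 ⟨T, fun t ht => ?_⟩))
      by_contra hpos
      exact key T le_rfl t ht hT0 (lt_of_le_of_ne (not_lt.1 hpos) (Ne.symm (hT t ht).1))
    · exact absurd hT0 (hT T le_rfl).1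
    · refine Or.inr (Or.inl (eventually_atTop.2 ⟨T, fun t ht => ?_⟩))
      by_contra hpos
      exact key t ht T le_rfl (lt_of_le_of_ne (not_lt.1 hpos) (hT t ht).1) hT0

lemma nonneg_or_neg {φ : ℝ → ℝ} (hφ : φ ∈ 𝓗.carrier) :
    (∀ᶠ t in atTop, 0 ≤ φ t) ∨ (∀ᶠ t in atTop, φ t < 0) := by
  rcases sign_trichotomy hφ with h | h | h
  · exact Or.inl (h.mono fun t ht => ht.ge)
  · exact Or.inl (h.mono fun t ht => ht.le)
  · exact Or.inr h

lemma abs_mem {φ : ℝ → ℝ} (hφ : φ ∈ 𝓗.carrier) : (fun t => |φ t|) ∈ 𝓗.carrier := by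
  rcases sign_trichotomy hφ with h | h | h
  · exact 𝓗.germ_closed 0 _ (h.mono fun t ht => by simp [ht]) 𝓗.zero_mem
  · exact 𝓗.germ_closed φ _ (h.mono fun t ht => (abs_of_pos ht).symm) hφ
  · exact 𝓗.germ_closed (-φ) _ (h.mono fun t ht => by simp [abs_of_neg ht]) (𝓗.neg_mem φ hφ)

lemma div_mem {f g : ℝ → ℝ} (hf : f ∈ 𝓗.carrier) (hg : g ∈ 𝓗.carrier)
    (hne : ∀ᶠ t in atTop, g t ≠ 0) : (fun t => f t / g t) ∈ 𝓗.carrier := by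
  have hgne : ¬ g =ᶠ[atTop] (0 : ℝ → ℝ) := by
    intro h
    obtain ⟨t, h1, h2⟩ := (h.and hne).exists
    exact h2 (by simpa using h1)
  obtain ⟨G, hG, hGeq⟩ := 𝓗.inv_mem g hg hgne
  have h := 𝓗.mul_mem f hf G hG
  refine 𝓗.germ_closed _ _ ?_ h
  filter_upwards [hGeq, hne] with t ht htne
  rw [Pi.mul_apply] at ht ⊢
  simp only [Pi.one_apply] at ht
  have : G t = (g t)⁻¹ := by field_simp at ht ⊢; linarith [mul_comm (g t) (G t)]
  rw [this, div_eq_mul_inv]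

lemma integ_bound {v w V W : ℝ → ℝ} {T t b : ℝ} (hTt : T ≤ t)
    (hv : ∀ s ∈ Set.Icc T t, HasDerivAt v (V s) s)
    (hw : ∀ s ∈ Set.Icc T t, HasDerivAt w (W s) s)
    (hVc : ContinuousOn V (Set.Icc T t)) (hWc : ContinuousOn W (Set.Icc T t))
    (hsign : (∀ s ∈ Set.Icc T t, 0 ≤ V s) ∨ (∀ s ∈ Set.Icc T t, V s ≤ 0))
    (hcmp : ∀ s ∈ Set.Icc T t, |W s| ≤ b * |V s|) :
    |w t - w T| ≤ b * |v t - v T| := by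
  have huIcc : Set.uIcc T t = Set.Icc T t := Set.uIcc_of_le hTt
  have hVint : IntervalIntegrable V volume T t :=
    ContinuousOn.intervalIntegrable (by rw [huIcc]; exact hVc)
  have hWint : IntervalIntegrable W volume T t :=
    ContinuousOn.intervalIntegrable (by rw [huIcc]; exact hWc)
  have hiv : ∫ s in T..t, V s = v t - v T :=
    intervalIntegral.integral_eq_sub_of_hasDerivAt (by rw [huIcc]; exact hv) hVint
  have hiw : ∫ s in T..t, W s = w t - w T :=
    intervalIntegral.integral_eq_sub_of_hasDerivAt (by rw [huIcc]; exact hw) hWint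
  have hVaint : IntervalIntegrable (fun s => |V s|) volume T t :=
    ContinuousOn.intervalIntegrable (by rw [huIcc]; exact hVc.abs)
  have hWaint : IntervalIntegrable (fun s => |W s|) volume T t :=
    ContinuousOn.intervalIntegrable (by rw [huIcc]; exact hWc.abs)
  have hbVint : IntervalIntegrable (fun s => b * |V s|) volume T t :=
    ContinuousOn.intervalIntegrable (by rw [huIcc]; exact continuousOn_const.mul hVc.abs)
  have h1 : |w t - w T| ≤ ∫ s in T..t, |W s| := by
    rw [← hiw]
    simpa [Real.norm_eq_abs] using
      intervalIntegral.norm_integral_le_integral_norm (f := W) (μ := volume) hTt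
  have h2 : (∫ s in T..t, |W s|) ≤ ∫ s in T..t, b * |V s| :=
    intervalIntegral.integral_mono_on hTt hWaint hbVint hcmp
  have h3 : (∫ s in T..t, b * |V s|) = b * ∫ s in T..t, |V s| :=
    intervalIntegral.integral_const_mul b _
  have h4 : (∫ s in T..t, |V s|) = |v t - v T| := by
    rcases hsign with hs | hs
    · have he : (∫ s in T..t, |V s|) = ∫ s in T..t, V s :=
        intervalIntegral.integral_congr (by rw [huIcc]; intro s hs'; exact abs_of_nonneg (hs s hs'))
      have hnn : 0 ≤ ∫ s in T..t, V s := intervalIntegral.integral_nonneg hTt hs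
      rw [he, hiv]; rw [hiv] at hnn; exact (abs_of_nonneg hnn).symm
    · have he : (∫ s in T..t, |V s|) = ∫ s in T..t, -V s :=
        intervalIntegral.integral_congr (by rw [huIcc]; intro s hs'; exact abs_of_nonpos (hs s hs'))
      have hnn : 0 ≤ ∫ s in T..t, -V s :=
        intervalIntegral.integral_nonneg hTt (fun s hs' => by simpa using hs s hs')
      rw [intervalIntegral.integral_neg, hiv] at hnn
      rw [he, intervalIntegral.integral_neg, hiv,
        abs_of_nonpos (by linarith : v t - v T ≤ 0)]
  calc |w t - w T| ≤ ∫ s in T..t, |W s| := h1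
    _ ≤ b * ∫ s in T..t, |V s| := by rw [← h3]; exact h2
    _ = b * |v t - v T| := by rw [h4]

end HardyAux

/-- If `f, g` belong to a Hardy field, `|f| ≺ |g| ≺ |f|·log^m(t)` and
`|log|f|| ≻ log₂(t)`, then `(g'/g)/(f'/f) → 1` as `t → ∞`. -/
theorem stmt_2 (m : ℕ) (𝓗 : HardyField) (f g : ℝ → ℝ)
    (hf : f ∈ 𝓗.carrier) (hg : g ∈ 𝓗.carrier)
    (h1 : Prec (fun t => |f t|) (fun t => |g t|))
    (h2 : Prec (fun t => |g t|) (fun t => |f t| * Real.log t ^ m))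
    (h3 : Prec log2 (fun t => |Real.log (|f t|)|)) :
    Tendsto (fun t => (deriv g t / g t) / (deriv f t / f t)) atTop (nhds 1) := by
  classical
  have hlog2 : Tendsto log2 atTop atTop := Real.tendsto_log_atTop.comp Real.tendsto_log_atTop
  have hsf := 𝓗.eventually_smooth f hf
  have hsg := 𝓗.eventually_smooth g hg
  have hsdf := 𝓗.eventually_smooth _ (𝓗.deriv_mem f hf)
  have hsdg := 𝓗.eventually_smooth _ (𝓗.deriv_mem g hg)
  have hA : ∀ᶠ t in atTop, f t ≠ 0 ∧ g t ≠ 0 ∧ 2 * |f t| ≤ |g t| := by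
    filter_upwards [h1.eventually_ge_atTop 2] with t ht
    have hf0 : f t ≠ 0 := by
      intro h; rw [h] at ht; norm_num at ht
    have hfpos : 0 < |f t| := abs_pos.2 hf0
    have h2f : 2 * |f t| ≤ |g t| := by
      rw [le_div_iff₀ hfpos] at ht; linarith
    refine ⟨hf0, ?_, h2f⟩
    intro h; rw [h] at h2f; simp at h2f; linarith
  have hB : ∀ᶠ t in atTop, |g t| ≤ |f t| * Real.log t ^ m := by
    filter_upwards [h2.eventually_ge_atTop 1, hA] with t ht hA'
    have hgpos : 0 < |g t| := abs_pos.2 hA'.2.1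
    rw [le_div_iff₀ hgpos, one_mul] at ht; linarith
  have hC : ∀ K : ℝ, ∀ᶠ t in atTop, K * log2 t ≤ |Real.log (f t)| := by
    intro K
    filter_upwards [h3.eventually_ge_atTop K, hlog2.eventually_ge_atTop 1] with t ht hl
    have hpos : 0 < log2 t := lt_of_lt_of_le one_pos hl
    rw [le_div_iff₀ hpos] at ht
    calc K * log2 t ≤ |Real.log (|f t|)| := ht
      _ = |Real.log (f t)| := by rw [Real.log_abs]
  have hfne : ∀ᶠ t in atTop, f t ≠ 0 := hA.mono fun t ht => ht.1
  have hgne : ∀ᶠ t in atTop, g t ≠ 0 := hA.mono fun t ht => ht.2.1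
  set W : ℝ → ℝ := fun t => deriv f t / f t with hWdef
  set V : ℝ → ℝ := fun t => deriv g t / g t - deriv f t / f t with hVdef
  have hWmem : W ∈ 𝓗.carrier := HardyAux.div_mem (𝓗.deriv_mem f hf) hf hfne
  have hVmem : V ∈ 𝓗.carrier :=
    HardyAux.sub_mem (HardyAux.div_mem (𝓗.deriv_mem g hg) hg hgne)
      (HardyAux.div_mem (𝓗.deriv_mem f hf) hf hfne)
  set vv : ℝ → ℝ := fun s => Real.log (g s) - Real.log (f s) with hvvdef
  set ww : ℝ → ℝ := fun s => Real.log (f s) with hwwdef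
  -- W is not eventually zero
  have hW0 : ¬ ∀ᶠ t in atTop, W t = 0 := by
    intro h
    have hd0 : ∀ᶠ t in atTop, deriv f t = 0 := by
      filter_upwards [h, hfne] with t ht hfne0
      exact (div_eq_zero_iff.1 ht).resolve_right hfne0
    obtain ⟨T, hT⟩ := eventually_atTop.1 (hd0.and (hsf.and (hC 1)))
    have hconst : ∀ t ≥ T, f t = f T := by
      intro t ht
      rcases eq_or_lt_of_le ht with h' | hlt
      · rw [← h']
      · have hcont : ContinuousOn f (Set.Icc T t) := fun x hx =>
          (((hT x hx.1).2.1) 0).continuousAt.continuousWithinAt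
        have hdiff : ∀ x ∈ Set.Ioo T t, HasDerivAt f (deriv f x) x := fun x hx =>
          ((((hT x hx.1.le).2.1) 1).differentiableAt (by norm_num)).hasDerivAt
        obtain ⟨c, hc, hslope⟩ := exists_hasDerivAt_eq_slope f (deriv f) hlt hcont hdiff
        have hc0 : deriv f c = 0 := (hT c hc.1.le).1
        rw [hc0] at hslope
        have htT : t - T ≠ 0 := by linarith
        field_simp at hslope
        linarith
    obtain ⟨t, ht1, ht2⟩ := ((hlog2.eventually_ge_atTop (|Real.log (f T)| + 1)).and
      (eventually_ge_atTop T)).exists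
    have h5 := (hT t ht2).2.2
    rw [hconst t ht2] at h5
    rw [one_mul] at h5
    linarith
  have hWsign : (∀ᶠ t in atTop, 0 < W t) ∨ (∀ᶠ t in atTop, W t < 0) :=
    ((HardyAux.sign_trichotomy hWmem).resolve_left hW0)
  have hWne : ∀ᶠ t in atTop, W t ≠ 0 := by
    rcases hWsign with h | h
    · exact h.mono fun t ht => ne_of_gt ht
    · exact h.mono fun t ht => ne_of_lt ht
  -- derivative package
  have hDeriv : ∀ᶠ s in atTop, HasDerivAt vv (V s) s ∧ HasDerivAt ww (W s) s ∧
      ContinuousAt V s ∧ ContinuousAt W s := by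
    filter_upwards [hsf, hsg, hsdf, hsdg, hfne, hgne] with s hsf' hsg' hsdf' hsdg' hf0 hg0
    have hdf : HasDerivAt f (deriv f s) s :=
      ((hsf' 1).differentiableAt (by norm_num)).hasDerivAt
    have hdg : HasDerivAt g (deriv g s) s :=
      ((hsg' 1).differentiableAt (by norm_num)).hasDerivAt
    have hwd : HasDerivAt ww (W s) s := hdf.log hf0
    have hgd : HasDerivAt (fun y => Real.log (g y)) (deriv g s / g s) s := hdg.log hg0
    have hvd : HasDerivAt vv (V s) s := hgd.sub hwd
    have hcW : ContinuousAt W s := (hsdf' 0).continuousAt.div (hsf' 0).continuousAt hf0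
    have hcV : ContinuousAt V s :=
      ((hsdg' 0).continuousAt.div (hsg' 0).continuousAt hg0).sub hcW
    exact ⟨hvd, hwd, hcV, hcW⟩
  -- bound on vv
  have hvbound : ∀ᶠ s in atTop, |vv s| ≤ (m:ℝ) * log2 s := by
    filter_upwards [hA, hB, Real.tendsto_log_atTop.eventually_ge_atTop 1,
      hlog2.eventually_ge_atTop 0] with s hA' hgb hl1 hl20
    obtain ⟨hf0, hg0, h2f⟩ := hA'
    have hfpos : 0 < |f s| := abs_pos.2 hf0
    have hgpos : 0 < |g s| := abs_pos.2 hg0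
    have hlpos : 0 < Real.log s := lt_of_lt_of_le one_pos hl1
    have hub : Real.log (|g s|) ≤ Real.log (|f s|) + (m:ℝ) * log2 s := by
      calc Real.log (|g s|) ≤ Real.log (|f s| * Real.log s ^ m) :=
            Real.log_le_log hgpos hgb
        _ = Real.log (|f s|) + (m:ℝ) * Real.log (Real.log s) := by
            rw [Real.log_mul (ne_of_gt hfpos) (by positivity), Real.log_pow]
        _ = Real.log (|f s|) + (m:ℝ) * log2 s := rfl
    have hlb : Real.log (|f s|) ≤ Real.log (|g s|) :=
      Real.log_le_log hfpos (by linarith)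
    have hveq : vv s = Real.log (|g s|) - Real.log (|f s|) := by
      simp only [hvvdef, Real.log_abs]
    rw [hveq, abs_le]
    have hmn : 0 ≤ (m:ℝ) * log2 s := mul_nonneg (Nat.cast_nonneg m) hl20
    constructor <;> linarith
  -- main claim
  have keyC : ∀ b : ℕ, 0 < b → ∀ᶠ t in atTop, (b:ℝ) * |V t| < |W t| := by
    intro b hb
    have hDmem : (fun t => (b:ℝ) * |V t| - |W t|) ∈ 𝓗.carrier :=
      HardyAux.sub_mem (HardyAux.nsmul_mem (HardyAux.abs_mem hVmem) b)
        (HardyAux.abs_mem hWmem)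
    rcases HardyAux.nonneg_or_neg hDmem with hbad | hgood
    · exfalso
      have hVsign : (∀ᶠ t in atTop, 0 ≤ V t) ∨ (∀ᶠ t in atTop, V t ≤ 0) := by
        rcases HardyAux.sign_trichotomy hVmem with h | h | h
        · exact Or.inl (h.mono fun t ht => ht.ge)
        · exact Or.inl (h.mono fun t ht => ht.le)
        · exact Or.inr (h.mono fun t ht => ht.le)
      have hall : ∀ᶠ s in atTop,
          (HasDerivAt vv (V s) s ∧ HasDerivAt ww (W s) s ∧
            ContinuousAt V s ∧ ContinuousAt W s) ∧
          |W s| ≤ (b:ℝ) * |V s| ∧ |vv s| ≤ (m:ℝ) * log2 s ∧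
          ((b:ℝ) * (m:ℝ) + 1) * log2 s ≤ |ww s| := by
        filter_upwards [hDeriv, hbad.mono (fun t ht => by linarith : ∀ t, (0:ℝ) ≤ (b:ℝ) * |V t| - |W t| → |W t| ≤ (b:ℝ) * |V t|), hvbound, hC ((b:ℝ) * (m:ℝ) + 1)] with s hs1 hs2 hs3 hs4
        exact ⟨hs1, hs2, hs3, hs4⟩
      obtain ⟨T0, hT0⟩ := eventually_atTop.1 hall
      obtain ⟨T, hTT0, hsgn⟩ : ∃ T, T0 ≤ T ∧
          ((∀ s ≥ T, 0 ≤ V s) ∨ (∀ s ≥ T, V s ≤ 0)) := by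
        rcases hVsign with h | h
        · obtain ⟨T1, h1'⟩ := eventually_atTop.1 h
          exact ⟨max T0 T1, le_max_left _ _,
            Or.inl fun s hs => h1' s (le_trans (le_max_right _ _) hs)⟩
        · obtain ⟨T1, h1'⟩ := eventually_atTop.1 h
          exact ⟨max T0 T1, le_max_left _ _,
            Or.inr fun s hs => h1' s (le_trans (le_max_right _ _) hs)⟩
      have hP : ∀ s, T ≤ s →
          (HasDerivAt vv (V s) s ∧ HasDerivAt ww (W s) s ∧
            ContinuousAt V s ∧ ContinuousAt W s) ∧
          |W s| ≤ (b:ℝ) * |V s| ∧ |vv s| ≤ (m:ℝ) * log2 s ∧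
          ((b:ℝ) * (m:ℝ) + 1) * log2 s ≤ |ww s| :=
        fun s hs => hT0 s (le_trans hTT0 hs)
      have hcontr : ∀ t, T ≤ t → log2 t ≤ (b:ℝ) * |vv T| + |ww T| + (b:ℝ) * |vv T| + |ww T| := by
        intro t ht
        have hib : |ww t - ww T| ≤ (b:ℝ) * |vv t - vv T| := by
          refine HardyAux.integ_bound ht
            (fun s hs => ((hP s hs.1).1).1) (fun s hs => ((hP s hs.1).1).2.1)
            (fun s hs => ((hP s hs.1).1).2.2.1.continuousWithinAt)
            (fun s hs => ((hP s hs.1).1).2.2.2.continuousWithinAt)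
            ?_ (fun s hs => (hP s hs.1).2.1)
          rcases hsgn with h | h
          · exact Or.inl fun s hs => h s hs.1
          · exact Or.inr fun s hs => h s hs.1
        have e1 : |ww t| - |ww T| ≤ |ww t - ww T| := abs_sub_abs_le_abs_sub _ _
        have e2 : |vv t - vv T| ≤ |vv t| + |vv T| := abs_sub _ _
        have e3 : ((b:ℝ) * (m:ℝ) + 1) * log2 t ≤ |ww t| := (hP t ht).2.2.2
        have e4 : |vv t| ≤ (m:ℝ) * log2 t := (hP t ht).2.2.1
        have hbnn : (0:ℝ) ≤ (b:ℝ) := Nat.cast_nonneg b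
        have e5 : (b:ℝ) * |vv t - vv T| ≤ (b:ℝ) * (|vv t| + |vv T|) :=
          mul_le_mul_of_nonneg_left e2 hbnn
        have e6 : (b:ℝ) * |vv t| ≤ (b:ℝ) * ((m:ℝ) * log2 t) :=
          mul_le_mul_of_nonneg_left e4 hbnn
        nlinarith [abs_nonneg (ww T), abs_nonneg (vv T)]
      obtain ⟨t, ht1, ht2⟩ := ((hlog2.eventually_ge_atTop
        ((b:ℝ) * |vv T| + |ww T| + (b:ℝ) * |vv T| + |ww T| + 1)).and
        (eventually_ge_atTop T)).exists
      linarith [hcontr t ht2]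
    · exact hgood.mono fun t ht => by linarith
  -- conclude V/W → 0
  have hVW0 : Tendsto (fun t => V t / W t) atTop (nhds 0) := by
    rw [NormedAddCommGroup.tendsto_nhds_zero]
    intro ε hε
    obtain ⟨n, hn⟩ := exists_nat_one_div_lt hε
    filter_upwards [keyC (n+1) (Nat.succ_pos n), hWne] with t ht hW0'
    have hWpos : 0 < |W t| := abs_pos.2 hW0'
    rw [Real.norm_eq_abs, abs_div, div_lt_iff₀ hWpos]
    have hnpos : (0:ℝ) < (n:ℝ) + 1 := by positivity
    have hcast : ((n+1 : ℕ):ℝ) = (n:ℝ) + 1 := by push_cast; ring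
    rw [hcast] at ht
    have h7 : |V t| < |W t| / ((n:ℝ) + 1) := by
      rw [lt_div_iff₀ hnpos]; linarith [ht]
    have h8 : |W t| / ((n:ℝ) + 1) = (1 / ((n:ℝ) + 1)) * |W t| := by ring
    have h9 : (1 / ((n:ℝ) + 1)) * |W t| < ε * |W t| :=
      mul_lt_mul_of_pos_right hn hWpos
    rw [h8] at h7
    linarith
  have hfinal : Tendsto (fun t => 1 + V t / W t) atTop (nhds 1) := by
    have := tendsto_const_nhds (α := ℝ) (x := (1:ℝ)) (f := (atTop : Filter ℝ))
    have h := this.add hVW0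
    simpa using h
  refine Tendsto.congr' ?_ hfinal
  filter_upwards [hWne] with t hW0'
  have hgg : deriv g t / g t = V t + W t := by simp [hVdef, hWdef]
  rw [hgg]
  show (1:ℝ) + V t / W t = (V t + W t) / W t
  rw [add_div, div_self hW0']
  ring


end
end

section
/- Let 𝓗 be a Hardy field and suppose f ∈ 𝓗 satisfies condition (B): there exists j ∈ ℕ such that t^{j−1} ≺ f(t) ≺ t^{j}. Then for every ℓ ∈ ℕ, the ℓ-th derivative f^{(ℓ)} satisfies either |f^{(ℓ)}(t)| → ∞ as t → ∞ or f^{(ℓ)}(t) → 0 as t → ∞. -/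
open Filter Real
open scoped Classical

noncomputable section

/-! The derivative of an element of a Hardy field is again in the field, hence eventually of
constant sign, so every element is eventually monotone and has a limit in `[-∞, ∞]`. If
`f^(ℓ) → c ≠ 0`, then `ℓ` applications of L'Hôpital's rule give `f(t) / t^ℓ → c / ℓ!`, so `f`
grows like `t^ℓ`, which (B) forbids. -/

open Asymptotics Set Topology

lemma monotoneOn_Ici_of_eventually_hasDerivAt_nonneg {g g' : ℝ → ℝ}
    (hd : ∀ᶠ t in atTop, HasDerivAt g (g' t) t) (hpos : ∀ᶠ t in atTop, 0 ≤ g' t) :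
    ∃ T, MonotoneOn g (Ici T) := by
  obtain ⟨T, hT⟩ := (hd.and hpos).exists_forall_of_atTop
  refine ⟨T, monotoneOn_of_hasDerivWithinAt_nonneg (convex_Ici T)
    (fun t ht => (hT t ht).1.continuousAt.continuousWithinAt)
    (fun t ht => (hT t (interior_subset ht)).1.hasDerivWithinAt)
    (fun t ht => (hT t (interior_subset ht)).2)⟩

lemma MonotoneOn.tendsto_atTop_or_exists_tendsto_nhds {g : ℝ → ℝ} {T : ℝ}
    (hg : MonotoneOn g (Ici T)) : Tendsto g atTop atTop ∨ ∃ c, Tendsto g atTop (𝓝 c) := by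
  have hmono : Monotone fun t => g (max t T) := fun s t hst =>
    hg (le_max_right s T) (le_max_right t T) (max_le_max hst le_rfl)
  have heq : (fun t => g (max t T)) =ᶠ[atTop] g := by
    filter_upwards [eventually_ge_atTop T] with t ht
    rw [max_eq_left ht]
  rcases tendsto_atTop_of_monotone hmono with h | ⟨c, hc⟩
  · exact Or.inl (h.congr' heq)
  · exact Or.inr ⟨c, hc.congr' heq⟩

namespace HardyField

variable (𝓗 : HardyField) {g : ℝ → ℝ}

lemma iteratedDeriv_mem (hg : g ∈ 𝓗.carrier) (n : ℕ) : iteratedDeriv n g ∈ 𝓗.carrier := by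
  induction n with
  | zero => simpa only [iteratedDeriv_zero] using hg
  | succ n ih => simpa only [iteratedDeriv_succ] using 𝓗.deriv_mem _ ih

lemma eventually_differentiableAt (hg : g ∈ 𝓗.carrier) :
    ∀ᶠ t in atTop, DifferentiableAt ℝ g t :=
  (𝓗.eventually_smooth g hg).mono fun _ ht => (ht 1).differentiableAt one_ne_zero

/-- An element that is not eventually zero is invertible, hence eventually nonzero; being
continuous, it then keeps its sign on a half-line. -/
lemma eventually_nonneg_or_nonpos (hg : g ∈ 𝓗.carrier) :
    (∀ᶠ t in atTop, 0 ≤ g t) ∨ (∀ᶠ t in atTop, g t ≤ 0) := by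
  by_cases h0 : g =ᶠ[atTop] 0
  · exact Or.inl (h0.mono fun t ht => ht.ge)
  obtain ⟨h, -, hgh⟩ := 𝓗.inv_mem g hg h0
  have hne : ∀ᶠ t in atTop, g t ≠ 0 := hgh.mono fun t ht hz => by
    simp [Pi.mul_apply, hz] at ht
  have hcont : ∀ᶠ t in atTop, ContinuousAt g t :=
    (𝓗.eventually_smooth g hg).mono fun _ ht => (ht 0).continuousAt
  obtain ⟨T, hT⟩ := (hne.and hcont).exists_forall_of_atTop
  have hsign := isPreconnected_Ici.mapsTo_Ioi_or_Iio
    (fun t ht => (hT t ht).2.continuousWithinAt) (fun t ht => (hT t ht).1)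
  rcases hsign with hpos | hneg
  · exact Or.inl (eventually_atTop.2 ⟨T, fun t ht => (hpos ht).le⟩)
  · exact Or.inr (eventually_atTop.2 ⟨T, fun t ht => (hneg ht).le⟩)

lemma tendsto_atTop_or_atBot_or_nhds (hg : g ∈ 𝓗.carrier) :
    Tendsto g atTop atTop ∨ Tendsto g atTop atBot ∨ ∃ c, Tendsto g atTop (𝓝 c) := by
  have hd : ∀ᶠ t in atTop, HasDerivAt g (deriv g t) t :=
    (𝓗.eventually_differentiableAt hg).mono fun _ ht => ht.hasDerivAt
  rcases 𝓗.eventually_nonneg_or_nonpos (𝓗.deriv_mem g hg) with hpos | hneg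
  · obtain ⟨T, hT⟩ := monotoneOn_Ici_of_eventually_hasDerivAt_nonneg hd hpos
    rcases hT.tendsto_atTop_or_exists_tendsto_nhds with h | h
    · exact Or.inl h
    · exact Or.inr (Or.inr h)
  · obtain ⟨T, hT⟩ := monotoneOn_Ici_of_eventually_hasDerivAt_nonneg
      (hd.mono fun _ ht => ht.neg) (hneg.mono fun _ ht => neg_nonneg.2 ht)
    rcases hT.tendsto_atTop_or_exists_tendsto_nhds with h | ⟨c, hc⟩
    · exact Or.inr (Or.inl (tendsto_neg_atTop_iff.1 h))
    · exact Or.inr (Or.inr ⟨-c, by simpa using hc.neg⟩)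

end HardyField

section LHopital

variable {f g f' g' : ℝ → ℝ}

-- `f - c * g` is eventually monotone, so `f ≥ c * g + O(1)`, and `g → ∞` absorbs the constant.
lemma eventually_lt_div_of_eventually_le_deriv (hf : ∀ᶠ t in atTop, HasDerivAt f (f' t) t)
    (hg : ∀ᶠ t in atTop, HasDerivAt g (g' t) t) (hgtop : Tendsto g atTop atTop)
    {b c : ℝ} (hbc : b < c) (hc : ∀ᶠ t in atTop, c * g' t ≤ f' t) :
    ∀ᶠ t in atTop, b < f t / g t := by
  obtain ⟨T, hT⟩ := monotoneOn_Ici_of_eventually_hasDerivAt_nonneg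
    (hf.and hg |>.mono fun _ ht => ht.1.sub (ht.2.const_mul c))
    (hc.mono fun _ ht => sub_nonneg.2 ht)
  have hsmall : ∀ᶠ t in atTop, b - c < (f T - c * g T) / g t :=
    (tendsto_const_nhds.div_atTop hgtop).eventually (eventually_gt_nhds (sub_neg.2 hbc))
  filter_upwards [eventually_ge_atTop T, hsmall, hgtop.eventually_gt_atTop 0]
    with t hTt hsmall hgpos
  have hmono : f T - c * g T ≤ f t - c * g t := hT self_mem_Ici hTt hTt
  calc b < c + (f T - c * g T) / g t := by linarith
    _ ≤ c + (f t - c * g t) / g t := by gcongr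
    _ = f t / g t := by field_simp; ring

lemma tendsto_div_of_tendsto_deriv_div (hf : ∀ᶠ t in atTop, HasDerivAt f (f' t) t)
    (hg : ∀ᶠ t in atTop, HasDerivAt g (g' t) t) (hg' : ∀ᶠ t in atTop, 0 < g' t)
    (hgtop : Tendsto g atTop atTop) {L : ℝ} (h : Tendsto (fun t => f' t / g' t) atTop (𝓝 L)) :
    Tendsto (fun t => f t / g t) atTop (𝓝 L) := by
  refine tendsto_order.2 ⟨fun b hb => ?_, fun b hb => ?_⟩
  · obtain ⟨c, hbc, hcL⟩ := exists_between hb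
    refine eventually_lt_div_of_eventually_le_deriv hf hg hgtop hbc ?_
    filter_upwards [(tendsto_order.1 h).1 c hcL, hg'] with t ht hpos
    exact ((lt_div_iff₀ hpos).1 ht).le
  · obtain ⟨c, hLc, hcb⟩ := exists_between hb
    have hneg := eventually_lt_div_of_eventually_le_deriv (f := fun t => -f t) (hf.mono fun _ ht => ht.neg) hg hgtop
      (neg_lt_neg hcb) (c := -c) ?_
    · filter_upwards [hneg] with t ht
      rw [neg_div] at ht
      linarith
    filter_upwards [(tendsto_order.1 h).2 c hLc, hg'] with t ht hpos
    have := ((div_lt_iff₀ hpos).1 ht).le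
    linarith

end LHopital

lemma tendsto_div_pow_succ_of_tendsto_deriv_div_pow {f : ℝ → ℝ} {n : ℕ} {d : ℝ}
    (hf : ∀ᶠ t in atTop, DifferentiableAt ℝ f t)
    (h : Tendsto (fun t => deriv f t / t ^ n) atTop (𝓝 d)) :
    Tendsto (fun t => f t / t ^ (n + 1)) atTop (𝓝 (d / (n + 1))) := by
  refine tendsto_div_of_tendsto_deriv_div (g' := fun t => (n + 1) * t ^ n)
    (hf.mono fun _ ht => ht.hasDerivAt) (Eventually.of_forall fun t => ?_)
    ((eventually_gt_atTop 0).mono fun t ht => by positivity)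
    (tendsto_pow_atTop n.succ_ne_zero) ?_
  · simpa using hasDerivAt_pow (n + 1) t
  · simpa only [div_div, mul_comm] using h.div_const ((n : ℝ) + 1)

lemma tendsto_div_pow_of_tendsto_iteratedDeriv {ℓ : ℕ} {f : ℝ → ℝ} {c : ℝ}
    (hf : ∀ k < ℓ, ∀ᶠ t in atTop, DifferentiableAt ℝ (iteratedDeriv k f) t)
    (h : Tendsto (iteratedDeriv ℓ f) atTop (𝓝 c)) :
    Tendsto (fun t => f t / t ^ ℓ) atTop (𝓝 (c / ℓ.factorial)) := by
  induction ℓ generalizing f with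
  | zero => simpa using h
  | succ n ih =>
    have hderiv := ih (f := deriv f)
      (fun k hk => by simpa only [← iteratedDeriv_succ'] using hf (k + 1) (by omega))
      (by rwa [← iteratedDeriv_succ'])
    have hstep := tendsto_div_pow_succ_of_tendsto_deriv_div_pow
      (by simpa only [iteratedDeriv_zero] using hf 0 n.succ_pos) hderiv
    rwa [div_div, ← Nat.cast_succ, ← Nat.cast_mul, mul_comm, ← Nat.factorial_succ] at hstep

lemma Prec.not_isBigO {f g : ℝ → ℝ} (h : Prec g f) : ¬ f =O[atTop] g := by
  intro hO
  obtain ⟨C, hC, hfg⟩ := hO.exists_pos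
  obtain ⟨t, hbound, hratio⟩ := (hfg.bound.and (h.eventually_gt_atTop C)).exists
  have hgt : g t ≠ 0 := fun hz => by simp [hz] at hratio; linarith
  rw [Real.norm_eq_abs, Real.norm_eq_abs, ← div_le_iff₀ (abs_pos.2 hgt), ← abs_div] at hbound
  linarith [le_abs_self (f t / g t)]

lemma isBigO_pow_pow_atTop_of_le {p q : ℕ} (hpq : p ≤ q) :
    (fun t : ℝ => t ^ p) =O[atTop] fun t => t ^ q := by
  rcases hpq.eq_or_lt with rfl | hlt
  · exact isBigO_refl _ _
  · exact (isLittleO_pow_pow_atTop_of_lt hlt).isBigO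

lemma not_condB_of_isTheta_pow {f : ℝ → ℝ} {ℓ : ℕ} (h : f =Θ[atTop] fun t => t ^ ℓ) :
    ¬ CondB f := by
  rintro ⟨j, hj, hlow, hhigh⟩
  rcases le_or_gt j ℓ with hjℓ | hℓj
  · exact hhigh.not_isBigO ((isBigO_pow_pow_atTop_of_le hjℓ).trans h.2)
  · exact hlow.not_isBigO (h.1.trans (isBigO_pow_pow_atTop_of_le (by omega)))

/-- If `f` belongs to a Hardy field and satisfies condition (B), then for every
`ℓ ∈ ℕ` the `ℓ`-th derivative satisfies `|f^(ℓ)(t)| → ∞` or `f^(ℓ)(t) → 0` as `t → ∞`. -/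
theorem stmt_3 (𝓗 : HardyField) (f : ℝ → ℝ) (hf : f ∈ 𝓗.carrier) (hB : CondB f) (ℓ : ℕ) :
    Tendsto (fun t => |iteratedDeriv ℓ f t|) atTop atTop ∨
      Tendsto (iteratedDeriv ℓ f) atTop (nhds 0) := by
  rcases 𝓗.tendsto_atTop_or_atBot_or_nhds (𝓗.iteratedDeriv_mem hf ℓ) with h | h | ⟨c, hc⟩
  · exact Or.inl (tendsto_abs_atTop_atTop.comp h)
  · exact Or.inl (tendsto_abs_atBot_atTop.comp h)
  obtain rfl | hc0 := eq_or_ne c 0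
  · exact Or.inr hc
  have hgrowth := tendsto_div_pow_of_tendsto_iteratedDeriv
    (fun k _ => 𝓗.eventually_differentiableAt (𝓗.iteratedDeriv_mem hf k)) hc
  have hΘ : f =Θ[atTop] fun t => t ^ ℓ :=
    (isTheta_of_div_tendsto_nhds_ne_zero hgrowth (by positivity)).symm
  exact absurd hB (not_condB_of_isTheta_pow hΘ)

end
end

section
/- Let m ∈ ℕ, let 𝓗 be a Hardy field, and let f, g ∈ 𝓗. Assume that f satisfies either |f(t)| → ∞ or f(t) → 0 as t → ∞, and that g satisfies either |g(t)| → ∞ or g(t) → 0 as t → ∞. Assume further that |f(t)| ≺ |g(t)| ≺ |f(t)|·log^m(t) and |log(|f(t)|)| ≪ log₂(t). Then |f'(t)/f(t)| / (log₂ t)² ≺ |g'(t)/g(t)| ≺ |f'(t)/f(t)| · (log₂ t)². -/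
/-!
Write `G = log |f|` and `F = log |g|`, so that `G' = f'/f`, `F' = g'/g`, `|G|, |F| → ∞` and
`|G|, |F| ≪ log₂ t`; by symmetry it suffices to show `|F'| (log₂ t)² / |G'| → ∞`.
The function `R = (F'/G') (log₂ t)²` lies in `𝓗[t, log t, log₂ t]`, and Rosenlicht's argument
(induction on the degree in the adjoined function) shows that in this ring every element and every
derivative is eventually of constant sign. Hence `R` is eventually monotone, so either `|R| → ∞`
or `R` is bounded. In the latter case `|F'| (log₂ t)² ≤ B |G'|`, and integrating `|G'| / (log₂ t)²`
by parts against `|G| ≪ log₂ t` shows that `F` stays bounded, a contradiction.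
-/

open Filter Real
open scoped Classical

noncomputable section

open Set Polynomial Topology

def EventuallySigned (w : ℝ → ℝ) : Prop :=
  ∃ σ : SignType, ∀ᶠ t in atTop, SignType.sign (w t) = σ

namespace EventuallySigned

variable {v w : ℝ → ℝ}

theorem congr (hv : EventuallySigned v) (hvw : v =ᶠ[atTop] w) : EventuallySigned w := by
  obtain ⟨σ, hσ⟩ := hv
  exact ⟨σ, by filter_upwards [hσ, hvw] with t h hvwt; rwa [← hvwt]⟩

theorem mul (hv : EventuallySigned v) (hw : EventuallySigned w) :
    EventuallySigned (v * w) := by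
  obtain ⟨σ, hσ⟩ := hv
  obtain ⟨τ, hτ⟩ := hw
  exact ⟨σ * τ, by filter_upwards [hσ, hτ] with t h h'; simp [sign_mul, h, h']⟩

theorem of_eventually_pos (hw : ∀ᶠ t in atTop, 0 < w t) : EventuallySigned w :=
  ⟨1, hw.mono fun _ h => sign_pos h⟩

theorem neg_iff : EventuallySigned (-w) ↔ EventuallySigned w := by
  constructor <;> rintro ⟨σ, hσ⟩ <;> exact ⟨-σ, hσ.mono fun t h => by simp [← h, Left.sign_neg]⟩

theorem eventually_eq_zero_or_ne_zero (hw : EventuallySigned w) :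
    w =ᶠ[atTop] 0 ∨ ∀ᶠ t in atTop, w t ≠ 0 := by
  obtain ⟨σ, hσ⟩ := hw
  rcases eq_or_ne σ 0 with rfl | hσ0
  · exact .inl (hσ.mono fun t h => sign_eq_zero_iff.mp h)
  · exact .inr (hσ.mono fun t h h0 => hσ0 (by rw [← h, h0, _root_.sign_zero]))

theorem exists_mul_eq_abs (hw : EventuallySigned w) :
    ∃ ε : ℝ, |ε| = 1 ∧ ∀ᶠ t in atTop, ε * w t = |w t| := by
  obtain ⟨σ, hσ⟩ := hw
  cases σ with
  | zero => exact ⟨1, by simp, hσ.mono fun t h => by simp [sign_eq_zero_iff.mp h]⟩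
  | pos => exact ⟨1, by simp, hσ.mono fun t h => by simp [abs_of_pos (sign_eq_one_iff.mp h)]⟩
  | neg =>
    exact ⟨-1, by simp, hσ.mono fun t h => by simp [abs_of_neg (sign_eq_neg_one_iff.mp h)]⟩

end EventuallySigned

theorem eventuallySigned_of_continuousAt {w : ℝ → ℝ} (hc : ∀ᶠ t in atTop, ContinuousAt w t)
    (hne : ∀ᶠ t in atTop, w t ≠ 0) : EventuallySigned w := by
  obtain ⟨T, hT⟩ := (hc.and hne).exists_forall_of_atTop
  have hcont : ContinuousOn w (Ici T) := fun t ht => (hT t ht).1.continuousWithinAt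
  refine ⟨SignType.sign (w T), eventually_atTop.mpr ⟨T, fun t ht => ?_⟩⟩
  by_contra hsign
  have hzero : (0 : ℝ) ∈ w '' Ici T := by
    rcases lt_or_gt_of_ne (hT T le_rfl).2 with hT0 | hT0 <;>
      rcases lt_or_gt_of_ne (hT t ht).2 with ht0 | ht0
    · simp [sign_neg hT0, sign_neg ht0] at hsign
    · exact isPreconnected_Ici.intermediate_value self_mem_Ici ht hcont ⟨hT0.le, ht0.le⟩
    · exact isPreconnected_Ici.intermediate_value ht self_mem_Ici hcont ⟨ht0.le, hT0.le⟩
    · simp [sign_pos hT0, sign_pos ht0] at hsign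
  obtain ⟨z, hz, hz0⟩ := hzero
  exact (hT z hz).2 hz0

theorem eventuallySigned_of_strictMonoOn {φ : ℝ → ℝ} {T : ℝ} (hφ : StrictMonoOn φ (Ici T)) :
    EventuallySigned φ := by
  by_cases h : ∃ z ≥ T, 0 ≤ φ z
  · obtain ⟨z, hzT, hz⟩ := h
    refine .of_eventually_pos ?_
    filter_upwards [eventually_gt_atTop z] with t ht
    exact hz.trans_lt (hφ (mem_Ici.mpr hzT) (mem_Ici.mpr (hzT.trans ht.le)) ht)
  · push Not at h
    exact ⟨-1, eventually_atTop.mpr ⟨T, fun t ht => sign_neg (h t ht)⟩⟩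

section Calculus

variable {φ φ' : ℝ → ℝ} {T : ℝ}

theorem hasDerivWithinAt_interior_Ici (hφ : ∀ t ≥ T, HasDerivAt φ (φ' t) t) :
    ∀ t ∈ interior (Ici T), HasDerivWithinAt φ (φ' t) (interior (Ici T)) t := by
  intro t ht
  rw [interior_Ici] at ht
  exact (hφ t (le_of_lt ht)).hasDerivWithinAt

theorem continuousOn_Ici_of_hasDerivAt (hφ : ∀ t ≥ T, HasDerivAt φ (φ' t) t) :
    ContinuousOn φ (Ici T) :=
  fun t ht => (hφ t ht).continuousAt.continuousWithinAt

theorem exists_eventually_eq_of_hasDerivAt_zero (hφ : ∀ᶠ t in atTop, HasDerivAt φ 0 t) :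
    ∃ K, ∀ᶠ t in atTop, φ t = K := by
  obtain ⟨T, hT⟩ := hφ.exists_forall_of_atTop
  have hd := hasDerivWithinAt_interior_Ici hT
  have hc := continuousOn_Ici_of_hasDerivAt hT
  refine ⟨φ T, eventually_atTop.mpr ⟨T, fun t ht => le_antisymm ?_ ?_⟩⟩
  · exact antitoneOn_of_hasDerivWithinAt_nonpos (convex_Ici T) hc hd (fun _ _ => le_rfl)
      self_mem_Ici ht ht
  · exact monotoneOn_of_hasDerivWithinAt_nonneg (convex_Ici T) hc hd (fun _ _ => le_rfl)
      self_mem_Ici ht ht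

theorem eventually_const_or_strictMonoOn_or_strictAntiOn
    (hφ : ∀ᶠ t in atTop, HasDerivAt φ (φ' t) t) (hφ' : EventuallySigned φ') :
    (∃ K, ∀ᶠ t in atTop, φ t = K) ∨ ∃ T, StrictMonoOn φ (Ici T) ∨ StrictAntiOn φ (Ici T) := by
  obtain ⟨σ, hσ⟩ := hφ'
  obtain ⟨T, hT⟩ := (hφ.and hσ).exists_forall_of_atTop
  have hd := hasDerivWithinAt_interior_Ici (φ := φ) fun t ht => (hT t ht).1
  have hc := continuousOn_Ici_of_hasDerivAt (φ := φ) fun t ht => (hT t ht).1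
  have hsign : ∀ t ∈ interior (Ici T), SignType.sign (φ' t) = σ := fun t ht =>
    (hT t (interior_subset ht)).2
  cases σ with
  | zero =>
    exact .inl <| exists_eventually_eq_of_hasDerivAt_zero <| (hφ.and hσ).mono fun _ h =>
      sign_eq_zero_iff.mp h.2 ▸ h.1
  | pos =>
    exact .inr ⟨T, .inl <| strictMonoOn_of_hasDerivWithinAt_pos (convex_Ici T) hc hd
      fun t ht => sign_eq_one_iff.mp (hsign t ht)⟩
  | neg =>
    exact .inr ⟨T, .inr <| strictAntiOn_of_hasDerivWithinAt_neg (convex_Ici T) hc hd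
      fun t ht => sign_eq_neg_one_iff.mp (hsign t ht)⟩

theorem EventuallySigned.of_hasDerivAt (hφ : ∀ᶠ t in atTop, HasDerivAt φ (φ' t) t)
    (hφ' : EventuallySigned φ') : EventuallySigned φ := by
  rcases eventually_const_or_strictMonoOn_or_strictAntiOn hφ hφ' with ⟨K, hK⟩ | ⟨T, hmono | hanti⟩
  · exact ⟨SignType.sign K, hK.mono fun t h => by rw [h]⟩
  · exact eventuallySigned_of_strictMonoOn hmono
  · exact EventuallySigned.neg_iff.mp (eventuallySigned_of_strictMonoOn hanti.neg)

theorem tendsto_abs_atTop_or_bounded_of_monotoneOn (hφ : MonotoneOn φ (Ici T)) :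
    Tendsto (fun t => |φ t|) atTop atTop ∨ ∃ B, ∀ᶠ t in atTop, |φ t| ≤ B := by
  by_cases hb : BddAbove (φ '' Ici T)
  · obtain ⟨B, hB⟩ := hb
    refine .inr ⟨max B (-φ T), eventually_atTop.mpr ⟨T, fun t ht => abs_le.mpr ⟨?_, ?_⟩⟩⟩
    · have := hφ self_mem_Ici ht ht
      linarith [le_max_right B (-φ T)]
    · exact (hB (mem_image_of_mem φ ht)).trans (le_max_left _ _)
  · refine .inl (tendsto_atTop_mono (fun t => le_abs_self (φ t)) (tendsto_atTop.mpr fun M => ?_))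
    obtain ⟨_, ⟨z, hz, rfl⟩, hMz⟩ := not_bddAbove_iff.mp hb M
    filter_upwards [eventually_ge_atTop z] with t ht
    exact hMz.le.trans (hφ hz (mem_Ici.mpr (le_trans hz ht)) ht)

theorem tendsto_abs_atTop_or_bounded_of_hasDerivAt (hφ : ∀ᶠ t in atTop, HasDerivAt φ (φ' t) t)
    (hφ' : EventuallySigned φ') :
    Tendsto (fun t => |φ t|) atTop atTop ∨ ∃ B, ∀ᶠ t in atTop, |φ t| ≤ B := by
  rcases eventually_const_or_strictMonoOn_or_strictAntiOn hφ hφ' with ⟨K, hK⟩ | ⟨T, hmono | hanti⟩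
  · exact .inr ⟨|K|, hK.mono fun t h => by rw [h]⟩
  · exact tendsto_abs_atTop_or_bounded_of_monotoneOn hmono.monotoneOn
  · simpa only [Pi.neg_apply, abs_neg] using
      tendsto_abs_atTop_or_bounded_of_monotoneOn hanti.neg.monotoneOn

theorem eventually_ne_zero_of_tendsto_abs (hφ : ∀ᶠ t in atTop, HasDerivAt φ (φ' t) t)
    (hφ' : EventuallySigned φ') (htop : Tendsto (fun t => |φ t|) atTop atTop) :
    ∀ᶠ t in atTop, φ' t ≠ 0 := by
  refine hφ'.eventually_eq_zero_or_ne_zero.resolve_left fun h0 => ?_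
  obtain ⟨K, hK⟩ := exists_eventually_eq_of_hasDerivAt_zero <| (hφ.and h0).mono fun _ h =>
    h.2 ▸ h.1
  exact not_tendsto_const_atTop |K| _ (htop.congr' (hK.mono fun t h => by rw [h]))

end Calculus

/-- `Y - B X / L² + 2 B C / L` is antitone: this is `∫ Y' ≤ B ∫ X' / L²` after integrating by
parts and using `X ≤ C L`, `L' ≥ 0`. -/
theorem le_of_deriv_mul_sq_le {X Y L X' Y' L' : ℝ → ℝ} {T B C : ℝ} (hB : 0 ≤ B) (hC : 0 ≤ C)
    (hX : ∀ t ≥ T, HasDerivAt X (X' t) t) (hY : ∀ t ≥ T, HasDerivAt Y (Y' t) t)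
    (hL : ∀ t ≥ T, HasDerivAt L (L' t) t) (hL_pos : ∀ t ≥ T, 0 < L t)
    (hL' : ∀ t ≥ T, 0 ≤ L' t) (hXY : ∀ t ≥ T, Y' t * L t ^ 2 ≤ B * X' t)
    (hXL : ∀ t ≥ T, X t ≤ C * L t) :
    ∀ t ≥ T, Y t ≤ Y T - B * X T / L T ^ 2 + 2 * B * C / L T := by
  set Ψ : ℝ → ℝ := fun t => Y t - B * X t / L t ^ 2 + 2 * B * C / L t
  set Ψ' : ℝ → ℝ := fun t =>
    (Y' t * L t ^ 2 - B * X' t) / L t ^ 2 + 2 * B * L' t * (X t - C * L t) / L t ^ 3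
    with hΨ'_def
  have hΨ : ∀ t ≥ T, HasDerivAt Ψ (Ψ' t) t := by
    intro t ht
    have hL0 := (hL_pos t ht).ne'
    refine (((hY t ht).sub (((hX t ht).const_mul B).div ((hL t ht).pow 2)
      (pow_ne_zero 2 hL0))).add (((hL t ht).inv hL0).const_mul (2 * B * C))).congr_deriv ?_
    simp only [hΨ'_def, Pi.pow_apply]
    field_simp
    ring
  have hΨ'_nonpos : ∀ t ≥ T, Ψ' t ≤ 0 := by
    intro t ht
    have hL0 := hL_pos t ht
    have h1 : (Y' t * L t ^ 2 - B * X' t) / L t ^ 2 ≤ 0 :=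
      div_nonpos_of_nonpos_of_nonneg (by linarith [hXY t ht]) (by positivity)
    have h2 : 2 * B * L' t * (X t - C * L t) / L t ^ 3 ≤ 0 :=
      div_nonpos_of_nonpos_of_nonneg
        (mul_nonpos_of_nonneg_of_nonpos (by positivity [hL' t ht]) (by linarith [hXL t ht]))
        (by positivity)
    linarith
  have hanti : AntitoneOn Ψ (Ici T) :=
    antitoneOn_of_hasDerivWithinAt_nonpos (convex_Ici T) (continuousOn_Ici_of_hasDerivAt hΨ)
      (hasDerivWithinAt_interior_Ici hΨ) fun t ht => hΨ'_nonpos t (interior_subset ht)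
  intro t ht
  have hΨt : Ψ t ≤ Ψ T := hanti self_mem_Ici ht ht
  have hXt : B * X t / L t ^ 2 ≤ B * C / L t := by
    have hL0 := hL_pos t ht
    rw [div_le_div_iff₀ (by positivity) hL0]
    nlinarith [hXL t ht, mul_le_mul_of_nonneg_left (hXL t ht) hB]
  have hCt : 0 ≤ B * C / L t := div_nonneg (mul_nonneg hB hC) (hL_pos t ht).le
  simp only [Ψ] at hΨt
  have : 2 * B * C / L t = 2 * (B * C / L t) := by ring
  linarith

theorem hasDerivAt_log2 {t : ℝ} (ht : 1 < t) : HasDerivAt log2 ((log t)⁻¹ * t⁻¹) t :=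
  (hasDerivAt_log (log_pos ht).ne').comp t (hasDerivAt_log (by linarith))

theorem log2_pos {t : ℝ} (ht : exp 1 < t) : 0 < log2 t :=
  log_pos ((lt_log_iff_exp_lt (by linarith [exp_pos 1])).mpr ht)

theorem not_tendsto_abs_of_deriv_mul_log2_sq_le {X Y X' Y' : ℝ → ℝ} {B C : ℝ}
    (hB : 0 ≤ B) (hC : 0 ≤ C)
    (hX : ∀ᶠ t in atTop, HasDerivAt X (X' t) t) (hY : ∀ᶠ t in atTop, HasDerivAt Y (Y' t) t)
    (hY' : ∀ᶠ t in atTop, 0 ≤ Y' t) (hXY : ∀ᶠ t in atTop, Y' t * log2 t ^ 2 ≤ B * X' t)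
    (hXL : ∀ᶠ t in atTop, X t ≤ C * log2 t) :
    ¬ Tendsto (fun t => |Y t|) atTop atTop := by
  intro hYtop
  obtain ⟨T, hT⟩ := (hX.and <| hY.and <| hY'.and <| hXY.and <| hXL.and <|
    eventually_gt_atTop (exp 1)).exists_forall_of_atTop
  have hT1 : ∀ t ≥ T, 1 < t := fun t ht =>
    lt_of_le_of_lt (by linarith [add_one_le_exp 1]) (hT t ht).2.2.2.2.2
  have hupper := le_of_deriv_mul_sq_le hB hC (fun t ht => (hT t ht).1)
    (fun t ht => (hT t ht).2.1) (fun t ht => hasDerivAt_log2 (hT1 t ht))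
    (fun t ht => log2_pos (hT t ht).2.2.2.2.2)
    (fun t ht => mul_nonneg (inv_nonneg.mpr (log_pos (hT1 t ht)).le)
      (inv_nonneg.mpr (by linarith [hT1 t ht]))) (fun t ht => (hT t ht).2.2.2.1)
    (fun t ht => (hT t ht).2.2.2.2.1)
  have hmono : MonotoneOn Y (Ici T) :=
    monotoneOn_of_hasDerivWithinAt_nonneg (convex_Ici T)
      (continuousOn_Ici_of_hasDerivAt fun t ht => (hT t ht).2.1)
      (hasDerivWithinAt_interior_Ici fun t ht => (hT t ht).2.1)
      fun t ht => (hT t (interior_subset ht)).2.2.1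
  obtain ⟨t, ht, hTt⟩ := ((hYtop.eventually (eventually_gt_atTop
    (max |Y T| |Y T - B * X T / log2 T ^ 2 + 2 * B * C / log2 T|))).and
    (eventually_ge_atTop T)).exists
  have hlow := hmono self_mem_Ici hTt hTt
  have hup := hupper t hTt
  rw [max_lt_iff] at ht
  rcases abs_cases (Y t) with ⟨h, _⟩ | ⟨h, _⟩ <;> rw [h] at ht
  · linarith [le_abs_self (Y T - B * X T / log2 T ^ 2 + 2 * B * C / log2 T)]
  · linarith [neg_abs_le (Y T)]

def eventuallyDifferentiable : Subring (ℝ → ℝ) where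
  carrier := {f | ∀ᶠ t in atTop, DifferentiableAt ℝ f t}
  mul_mem' hf hg := (hf.and hg).mono fun _ h => h.1.mul h.2
  one_mem' := .of_forall fun _ => differentiableAt_const _
  add_mem' hf hg := (hf.and hg).mono fun _ h => h.1.add h.2
  zero_mem' := .of_forall fun _ => differentiableAt_const _
  neg_mem' hf := hf.mono fun _ h => h.neg

theorem eventually_eventuallyEq_nhds_of_atTop {f g : ℝ → ℝ} (h : f =ᶠ[atTop] g) :
    ∀ᶠ t in atTop, f =ᶠ[𝓝 t] g := by
  obtain ⟨T, hT⟩ := h.exists_forall_of_atTop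
  filter_upwards [eventually_gt_atTop T] with t ht
  filter_upwards [Ioi_mem_nhds ht] with s hs using hT s hs.le

theorem Filter.EventuallyEq.deriv_atTop {f g : ℝ → ℝ} (h : f =ᶠ[atTop] g) :
    deriv f =ᶠ[atTop] deriv g :=
  (eventually_eventuallyEq_nhds_of_atTop h).mono fun _ h => h.deriv_eq

theorem mem_eventuallyDifferentiable_of_eventuallyEq {f g : ℝ → ℝ}
    (hf : f ∈ eventuallyDifferentiable) (h : f =ᶠ[atTop] g) : g ∈ eventuallyDifferentiable := by
  filter_upwards [hf, eventually_eventuallyEq_nhds_of_atTop h] with t ht hfg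
  exact ht.congr_of_eventuallyEq hfg.symm

theorem eval₂_subtype_mem {S T : Subring (ℝ → ℝ)} (hST : S ≤ T) {y : ℝ → ℝ} (hy : y ∈ T)
    (p : S[X]) : p.eval₂ S.subtype y ∈ T := by
  rw [eval₂_eq_sum]
  exact T.sum_mem fun i _ => T.mul_mem (hST (p.coeff i).2) (T.pow_mem hy i)

theorem eval₂_subtype_apply {S : Subring (ℝ → ℝ)} (y : ℝ → ℝ) (p : S[X]) (t : ℝ) :
    p.eval₂ S.subtype y t = ∑ i ∈ p.support, (p.coeff i : ℝ → ℝ) t * y t ^ i := by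
  simp [eval₂_eq_sum, Polynomial.sum_def, Finset.sum_apply]

def adjoin (S : Subring (ℝ → ℝ)) (y : ℝ → ℝ) : Subring (ℝ → ℝ) where
  carrier := {h | ∃ p : S[X], p.eval₂ S.subtype y =ᶠ[atTop] h}
  mul_mem' := by
    rintro _ _ ⟨p, hp⟩ ⟨q, hq⟩
    exact ⟨p * q, by rw [eval₂_mul]; exact hp.mul hq⟩
  one_mem' := ⟨1, by rw [eval₂_one]⟩
  add_mem' := by
    rintro _ _ ⟨p, hp⟩ ⟨q, hq⟩
    exact ⟨p + q, by rw [eval₂_add]; exact hp.add hq⟩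
  zero_mem' := ⟨0, by rw [eval₂_zero]⟩
  neg_mem' := by
    rintro _ ⟨p, hp⟩
    exact ⟨-p, by rw [eval₂_neg]; exact hp.neg⟩

section Adjoin

variable {S : Subring (ℝ → ℝ)} {y : ℝ → ℝ}

theorem le_adjoin : S ≤ adjoin S y :=
  fun a ha => ⟨C ⟨a, ha⟩, by rw [eval₂_C]; rfl⟩

theorem mem_adjoin_self : y ∈ adjoin S y :=
  ⟨X, by rw [eval₂_X]⟩

end Adjoin

/-- The part of the Hardy field axioms that survives adjoining `log`-type functions without
passing to fractions: the derivation is twisted by a weight `μ > 0`. -/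
structure IsHardyRing (S : Subring (ℝ → ℝ)) (μ : ℝ → ℝ) : Prop where
  eventually_pos : ∀ᶠ t in atTop, 0 < μ t
  le_eventuallyDifferentiable : S ≤ eventuallyDifferentiable
  eventuallySigned : ∀ h ∈ S, EventuallySigned h
  mul_deriv_mem : ∀ h ∈ S, μ * deriv h ∈ S

namespace IsHardyRing

variable {S : Subring (ℝ → ℝ)} {μ : ℝ → ℝ}

theorem mul_weight (hS : IsHardyRing S μ) {m : ℝ → ℝ} (hm : m ∈ S)
    (hm_pos : ∀ᶠ t in atTop, 0 < m t) :
    IsHardyRing S (μ * m) where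
  eventually_pos := (hS.eventually_pos.and hm_pos).mono fun _ h => mul_pos h.1 h.2
  le_eventuallyDifferentiable := hS.le_eventuallyDifferentiable
  eventuallySigned := hS.eventuallySigned
  mul_deriv_mem h hh := by
    rw [mul_comm μ, mul_assoc]
    exact S.mul_mem hm (hS.mul_deriv_mem h hh)

theorem eventually_hasDerivAt (hS : IsHardyRing S μ) {h : ℝ → ℝ} (hh : h ∈ S) :
    ∀ᶠ t in atTop, HasDerivAt h (deriv h t) t :=
  (hS.le_eventuallyDifferentiable hh).mono fun _ h => h.hasDerivAt

theorem eventuallySigned_deriv (hS : IsHardyRing S μ) {h : ℝ → ℝ} (hh : h ∈ S) :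
    EventuallySigned (deriv h) := by
  refine ((hS.eventuallySigned _ (hS.mul_deriv_mem h hh)).mul
    (.of_eventually_pos (hS.eventually_pos.mono fun _ h => inv_pos.mpr h))).congr ?_
  filter_upwards [hS.eventually_pos] with t ht
  simp [field]

def der (hS : IsHardyRing S μ) (a : S) : S := ⟨μ * deriv a, hS.mul_deriv_mem a a.2⟩

theorem der_zero (hS : IsHardyRing S μ) : hS.der 0 = 0 := by
  ext1; simp [der]

/-- Given `μ y' = ν`, the polynomial `r` with `μ (p(y))' = r(y)`. -/
def derivPoly (hS : IsHardyRing S μ) (ν : S) (p : S[X]) : S[X] :=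
  p.sum (fun i a => monomial i (hS.der a)) + derivative p * C ν

theorem coeff_derivPoly (hS : IsHardyRing S μ) (ν : S) (p : S[X]) (n : ℕ) :
    (hS.derivPoly ν p).coeff n = hS.der (p.coeff n) + p.coeff (n + 1) * (n + 1) * ν := by
  rw [derivPoly, coeff_add, coeff_mul_C, coeff_derivative, Polynomial.sum_def,
    finsetSum_coeff]
  simp only [coeff_monomial]
  rw [Finset.sum_ite_eq']
  split_ifs with hn
  · rfl
  · rw [notMem_support_iff.mp hn, hS.der_zero]

theorem natDegree_derivPoly_le (hS : IsHardyRing S μ) (ν : S) (p : S[X]) :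
    (hS.derivPoly ν p).natDegree ≤ p.natDegree := by
  refine natDegree_add_le_of_degree_le ?_ ?_
  · exact natDegree_sum_le_of_forall_le _ _ fun i hi =>
      (natDegree_monomial_le _).trans (le_natDegree_of_mem_supp i hi)
  · exact (natDegree_mul_C_le _ _).trans ((natDegree_derivative_le p).trans (Nat.sub_le _ _))

theorem mul_deriv_eval₂ (hS : IsHardyRing S μ) {y : ℝ → ℝ} {ν : S}
    (hy : y ∈ eventuallyDifferentiable) (hyν : μ * deriv y =ᶠ[atTop] ν) (p : S[X]) :
    μ * deriv (p.eval₂ S.subtype y) =ᶠ[atTop] (hS.derivPoly ν p).eval₂ S.subtype y := by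
  have hcoeff : ∀ᶠ t in atTop, ∀ i ∈ p.support, DifferentiableAt ℝ (p.coeff i : ℝ → ℝ) t :=
    (Finset.eventually_all _).mpr fun i _ => hS.le_eventuallyDifferentiable (p.coeff i).2
  filter_upwards [hcoeff, hy, hyν] with t hc hyt hνt
  have hd : HasDerivAt (p.eval₂ S.subtype y) (∑ i ∈ p.support,
      (deriv (p.coeff i : ℝ → ℝ) t * y t ^ i +
        (p.coeff i : ℝ → ℝ) t * (i * y t ^ (i - 1) * deriv y t))) t := by
    rw [show p.eval₂ S.subtype y = fun x => ∑ i ∈ p.support, (p.coeff i : ℝ → ℝ) x * y x ^ i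
      from funext (eval₂_subtype_apply y p)]
    exact HasDerivAt.fun_sum fun i hi => (hc i hi).hasDerivAt.mul (hyt.hasDerivAt.pow i)
  rw [Pi.mul_apply, hd.deriv, derivPoly, derivative_apply, Polynomial.sum_def,
    Polynomial.sum_def, eval₂_add, eval₂_mul, eval₂_finsetSum, eval₂_finsetSum, eval₂_C]
  simp only [eval₂_monomial, eval₂_mul, eval₂_C, eval₂_X_pow, Pi.add_apply, Pi.mul_apply,
    Finset.sum_apply, Pi.pow_apply, Subring.coe_subtype, Subring.coe_mul, Subring.coe_natCast,
    Pi.natCast_apply, der, Finset.mul_sum, Finset.sum_mul, ← Finset.sum_add_distrib]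
  refine Finset.sum_congr rfl fun i _ => ?_
  rw [← hνt, Pi.mul_apply]
  ring

theorem natDegree_C_leadingCoeff_mul_derivPoly_sub_lt (hS : IsHardyRing S μ) (ν : S) {p : S[X]}
    (hp : 0 < p.natDegree) :
    (C p.leadingCoeff * hS.derivPoly ν p - C (hS.der p.leadingCoeff) * p).natDegree <
      p.natDegree := by
  have hle : (C p.leadingCoeff * hS.derivPoly ν p - C (hS.der p.leadingCoeff) * p).natDegree ≤
      p.natDegree :=
    (natDegree_sub_le _ _).trans (max_le ((natDegree_C_mul_le _ _).trans
      (hS.natDegree_derivPoly_le ν p)) (natDegree_C_mul_le _ _))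
  have hcoeff : (C p.leadingCoeff * hS.derivPoly ν p -
      C (hS.der p.leadingCoeff) * p).coeff p.natDegree = 0 := by
    rw [coeff_sub, coeff_C_mul, coeff_C_mul, coeff_derivPoly,
      coeff_eq_zero_of_natDegree_lt (Nat.lt_succ_self _)]
    simp only [coeff_natDegree, zero_mul, add_zero]
    ring
  exact lt_of_le_of_lt (natDegree_le_pred hle hcoeff) (Nat.sub_lt hp one_pos)

/-- Rosenlicht's argument: if `c` is the leading coefficient of `p`, then `(p(y) / c)'` is
`q(y) / (μ c²)` with `deg q < deg p`, so by induction `p(y) / c` is eventually monotone. -/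
theorem eventuallySigned_eval₂ (hS : IsHardyRing S μ) {y : ℝ → ℝ} {ν : S}
    (hy : y ∈ eventuallyDifferentiable) (hyν : μ * deriv y =ᶠ[atTop] ν) (p : S[X]) :
    EventuallySigned (p.eval₂ S.subtype y) := by
  induction hn : p.natDegree using Nat.strong_induction_on generalizing p with
  | _ n ih =>
  rcases Nat.eq_zero_or_pos n with rfl | hn0
  · rw [eq_C_of_natDegree_eq_zero hn, eval₂_C]
    exact hS.eventuallySigned _ (p.coeff 0).2
  set c := p.leadingCoeff
  have hc := hS.eventuallySigned c c.2
  rcases hc.eventually_eq_zero_or_ne_zero with hc0 | hc0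
  · refine (ih _ ((eraseLead_natDegree_le p).trans_lt (by omega)) p.eraseLead rfl).congr ?_
    filter_upwards [hc0] with t ht
    have hp := congrArg (eval₂ S.subtype y) (eraseLead_add_monomial_natDegree_leadingCoeff p)
    rw [eval₂_add, eval₂_monomial] at hp
    rw [← hp, Pi.add_apply, Pi.mul_apply, Subring.coe_subtype,
      show (p.leadingCoeff : ℝ → ℝ) t = 0 from ht, zero_mul, add_zero]
  set q := C c * hS.derivPoly ν p - C (hS.der c) * p
  have hq := ih _ (hn ▸ hS.natDegree_C_leadingCoeff_mul_derivPoly_sub_lt ν (hn ▸ hn0)) q rfl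
  have hp_diff := eval₂_subtype_mem hS.le_eventuallyDifferentiable hy p
  have hφ : ∀ᶠ t in atTop, HasDerivAt (fun x => p.eval₂ S.subtype y x / (c : ℝ → ℝ) x)
      (q.eval₂ S.subtype y t * ((μ t * (c : ℝ → ℝ) t ^ 2)⁻¹)) t := by
    filter_upwards [hS.mul_deriv_eval₂ hy hyν p, hp_diff,
      hS.le_eventuallyDifferentiable c.2, hc0, hS.eventually_pos] with t hD hpd hcd hct hμ
    refine (hpd.hasDerivAt.div hcd.hasDerivAt hct).congr_deriv ?_
    simp only [q, eval₂_sub, eval₂_mul, eval₂_C, Pi.sub_apply, Pi.mul_apply, ← hD]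
    simp only [Subring.coe_subtype, der, Pi.mul_apply]
    field_simp
  have hφ' : EventuallySigned
      (fun t => q.eval₂ S.subtype y t * ((μ t * (c : ℝ → ℝ) t ^ 2)⁻¹)) :=
    hq.mul (.of_eventually_pos (by
      filter_upwards [hS.eventually_pos, hc0] with t hμ hct
      positivity))
  refine ((EventuallySigned.of_hasDerivAt hφ hφ').mul hc).congr ?_
  filter_upwards [hc0] with t hct
  simp [hct]

theorem adjoin (hS : IsHardyRing S μ) {y : ℝ → ℝ} {ν : ℝ → ℝ}
    (hy : y ∈ eventuallyDifferentiable) (hν : ν ∈ S) (hyν : μ * deriv y =ᶠ[atTop] ν) :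
    IsHardyRing (adjoin S y) μ where
  eventually_pos := hS.eventually_pos
  le_eventuallyDifferentiable := by
    rintro h ⟨p, hp⟩
    exact mem_eventuallyDifferentiable_of_eventuallyEq
      (eval₂_subtype_mem hS.le_eventuallyDifferentiable hy p) hp
  eventuallySigned := by
    rintro h ⟨p, hp⟩
    exact (hS.eventuallySigned_eval₂ (ν := ⟨ν, hν⟩) hy hyν p).congr hp
  mul_deriv_mem := by
    rintro h ⟨p, hp⟩
    refine ⟨hS.derivPoly ⟨ν, hν⟩ p, ?_⟩
    filter_upwards [hS.mul_deriv_eval₂ (ν := ⟨ν, hν⟩) hy hyν p, hp.deriv_atTop] with t h1 h2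
    rw [← h1, Pi.mul_apply, Pi.mul_apply, h2]

end IsHardyRing

namespace HardyField

variable (H : HardyField)

def toSubring : Subring (ℝ → ℝ) where
  carrier := H.carrier
  mul_mem' {a b} ha hb := H.mul_mem a ha b hb
  one_mem' := H.one_mem
  add_mem' {a b} ha hb := H.add_mem a ha b hb
  zero_mem' := H.zero_mem
  neg_mem' {a} ha := H.neg_mem a ha

theorem isHardyRing : IsHardyRing H.toSubring 1 where
  eventually_pos := .of_forall fun _ => one_pos
  le_eventuallyDifferentiable h hh :=
    (H.eventually_smooth h hh).mono fun _ ht => (ht 1).differentiableAt one_ne_zero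
  eventuallySigned h hh := by
    by_cases h0 : h =ᶠ[atTop] 0
    · exact ⟨0, h0.mono fun t ht => by simp [ht]⟩
    obtain ⟨k, -, hk⟩ := H.inv_mem h hh h0
    refine eventuallySigned_of_continuousAt
      ((H.eventually_smooth h hh).mono fun _ ht => (ht 0).continuousAt) ?_
    filter_upwards [hk] with t ht h0
    simp [h0] at ht
  mul_deriv_mem h hh := by
    rw [one_mul]
    exact H.deriv_mem h hh

variable {H}

theorem div_mem {f g : ℝ → ℝ} (hf : f ∈ H.carrier) (hg : g ∈ H.carrier)
    (hg0 : ∀ᶠ t in atTop, g t ≠ 0) : f / g ∈ H.carrier := by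
  obtain ⟨k, hk, hgk⟩ := H.inv_mem g hg fun h0 => (hg0.and h0).exists.elim fun _ h => h.1 h.2
  refine H.germ_closed _ _ ?_ (H.mul_mem f hf k hk)
  filter_upwards [hgk] with t ht
  simp [div_eq_mul_inv, eq_inv_of_mul_eq_one_right (by simpa using ht)]

end HardyField

def logTower (H : HardyField) : Subring (ℝ → ℝ) :=
  adjoin (adjoin (adjoin H.toSubring id) log) log2

theorem isHardyRing_logTower (H : HardyField) : IsHardyRing (logTower H) (id * log) := by
  have h₁ := (H.isHardyRing.adjoin (y := id) (.of_forall fun _ => differentiableAt_id)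
    (Subring.one_mem _) (.of_forall fun t => by simp)).mul_weight mem_adjoin_self
    (eventually_gt_atTop 0)
  have h₂ := (h₁.adjoin (y := log) ((eventually_gt_atTop 0).mono fun _ ht =>
    differentiableAt_log ht.ne') (Subring.one_mem _) ((eventually_gt_atTop 0).mono
      fun t ht => by simp [ht.ne'])).mul_weight mem_adjoin_self (eventually_gt_atTop 1 |>.mono
        fun _ ht => log_pos ht)
  rw [one_mul] at h₂
  exact h₂.adjoin ((eventually_gt_atTop 1).mono fun _ ht => (hasDerivAt_log2 ht).differentiableAt)
    (Subring.one_mem _) ((eventually_gt_atTop 1).mono fun t ht => by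
      have hlog := (log_pos ht).ne'
      simp [(hasDerivAt_log2 ht).deriv, field])

theorem HardyField.le_logTower (H : HardyField) : H.toSubring ≤ logTower H :=
  le_adjoin.trans (le_adjoin.trans le_adjoin)

theorem log2_mem_logTower (H : HardyField) : log2 ∈ logTower H :=
  mem_adjoin_self

theorem tendsto_abs_mul_log2_sq_div_abs {H : HardyField} {u v G F : ℝ → ℝ} {C : ℝ} (hC : 0 ≤ C)
    (hu : u ∈ H.carrier) (hv : v ∈ H.carrier) (hG : ∀ᶠ t in atTop, HasDerivAt G (u t) t)
    (hF : ∀ᶠ t in atTop, HasDerivAt F (v t) t) (hGtop : Tendsto (fun t => |G t|) atTop atTop)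
    (hFtop : Tendsto (fun t => |F t|) atTop atTop)
    (hGle : ∀ᶠ t in atTop, |G t| ≤ C * log2 t) :
    Tendsto (fun t => |v t| * log2 t ^ 2 / |u t|) atTop atTop := by
  have hu_sign := H.isHardyRing.eventuallySigned u hu
  have hu0 := eventually_ne_zero_of_tendsto_abs hG hu_sign hGtop
  have hR : v / u * log2 ^ 2 ∈ logTower H :=
    (logTower H).mul_mem (H.le_logTower (HardyField.div_mem hv hu hu0))
      ((logTower H).pow_mem (log2_mem_logTower H) 2)
  have hR_abs : ∀ t, |(v / u * log2 ^ 2) t| = |v t| * log2 t ^ 2 / |u t| := fun t => by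
    simp [abs_mul, abs_div, div_mul_eq_mul_div]
  rcases tendsto_abs_atTop_or_bounded_of_hasDerivAt
    ((isHardyRing_logTower H).eventually_hasDerivAt hR)
    ((isHardyRing_logTower H).eventuallySigned_deriv hR) with htop | ⟨B, hB⟩
  · simpa only [hR_abs] using htop
  obtain ⟨ε₁, hε₁, hu_abs⟩ := hu_sign.exists_mul_eq_abs
  obtain ⟨ε₂, hε₂, hv_abs⟩ := (H.isHardyRing.eventuallySigned v hv).exists_mul_eq_abs
  refine absurd (by simpa [abs_mul, hε₂] using hFtop) (not_tendsto_abs_of_deriv_mul_log2_sq_le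
    (X := fun t => ε₁ * G t) (Y := fun t => ε₂ * F t) (le_max_right B 0) hC
    (hG.mono fun _ h => h.const_mul ε₁) (hF.mono fun _ h => h.const_mul ε₂) ?_ ?_ ?_)
  · filter_upwards [hv_abs] with t h
    exact h ▸ abs_nonneg _
  · filter_upwards [hB, hu0, hu_abs, hv_abs] with t hBt hut hu hv
    rw [hu, hv, ← div_le_iff₀ (abs_pos.mpr hut), ← hR_abs]
    exact hBt.trans (le_max_left B 0)
  · filter_upwards [hGle] with t ht
    exact (le_abs_self _).trans (by rwa [abs_mul, hε₁, one_mul])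

theorem Prec.eventually_ne_zero {f g : ℝ → ℝ} (h : Prec f g) :
    ∀ᶠ t in atTop, f t ≠ 0 ∧ g t ≠ 0 := by
  filter_upwards [h.eventually (eventually_gt_atTop 0)] with t ht
  exact ⟨fun h0 => by simp [h0] at ht, fun h0 => by simp [h0] at ht⟩

theorem HardyField.eventually_hasDerivAt_log {H : HardyField} {f : ℝ → ℝ} (hf : f ∈ H.carrier)
    (hf0 : ∀ᶠ t in atTop, f t ≠ 0) :
    ∀ᶠ t in atTop, HasDerivAt (fun t => log (f t)) ((deriv f / f) t) t := by
  filter_upwards [H.isHardyRing.eventually_hasDerivAt hf, hf0] with t hd ht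
  exact hd.log ht

theorem tendsto_abs_log_atTop {f : ℝ → ℝ}
    (hf : Tendsto (fun t => |f t|) atTop atTop ∨ Tendsto f atTop (𝓝 0))
    (hf0 : ∀ᶠ t in atTop, f t ≠ 0) : Tendsto (fun t => |log (f t)|) atTop atTop := by
  simp_rw [← log_abs (f _)]
  rcases hf with htop | hzero
  · exact tendsto_abs_atTop_atTop.comp (tendsto_log_atTop.comp htop)
  · refine tendsto_abs_atBot_atTop.comp (tendsto_log_nhdsGT_zero.comp ?_)
    exact tendsto_nhdsWithin_iff.mpr ⟨by simpa using hzero.abs,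
      hf0.mono fun _ h => abs_pos.mpr h⟩

theorem eventually_abs_log_le_of_prec {f g : ℝ → ℝ} {m : ℕ} {C : ℝ}
    (h2 : Prec (fun t => |f t|) (fun t => |g t|))
    (h3 : Prec (fun t => |g t|) (fun t => |f t| * log t ^ m))
    (hf : ∀ᶠ t in atTop, |log (f t)| ≤ C * log2 t) :
    ∀ᶠ t in atTop, |log (g t)| ≤ (C + m) * log2 t := by
  filter_upwards [hf, h2.eventually (eventually_ge_atTop 1), h3.eventually (eventually_ge_atTop 1),
    h2.eventually_ne_zero, eventually_gt_atTop (exp 1)] with t hft h2t h3t hne ht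
  have hf_pos := abs_pos.mpr (abs_ne_zero.mp hne.1)
  have hg_pos := abs_pos.mpr (abs_ne_zero.mp hne.2)
  have hlog_pos : 0 < log t :=
    ((lt_log_iff_exp_lt (by linarith [exp_pos 1])).mpr ht).trans' one_pos
  have h_lo : log |f t| ≤ log |g t| := log_le_log hf_pos ((one_le_div hf_pos).mp h2t)
  have h_hi : log |g t| ≤ log |f t| + m * log2 t :=
    calc log |g t| ≤ log (|f t| * log t ^ m) := log_le_log hg_pos ((one_le_div hg_pos).mp h3t)
      _ = log |f t| + m * log2 t := by rw [log_mul hf_pos.ne' (by positivity), log_pow]; rfl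
  have hmL : 0 ≤ (m : ℝ) * log2 t := mul_nonneg m.cast_nonneg (log2_pos ht).le
  rw [log_abs, log_abs] at h_lo h_hi
  rw [abs_le] at hft ⊢
  constructor <;> linarith [hft.1, hft.2]

/-- If `f, g` belong to a Hardy field, each of `|f|, |g|` tends to `∞` or to `0`,
`|f| ≺ |g| ≺ |f|·log^m(t)` and `|log|f|| ≪ log₂(t)`, then
`|f'/f|/(log₂ t)² ≺ |g'/g| ≺ |f'/f|·(log₂ t)²`. -/
theorem stmt_5 (m : ℕ) (𝓗 : HardyField) (f g : ℝ → ℝ)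
    (hf : f ∈ 𝓗.carrier) (hg : g ∈ 𝓗.carrier)
    (h1f : Tendsto (fun t => |f t|) atTop atTop ∨ Tendsto f atTop (nhds 0))
    (h1g : Tendsto (fun t => |g t|) atTop atTop ∨ Tendsto g atTop (nhds 0))
    (h2 : Prec (fun t => |f t|) (fun t => |g t|))
    (h3 : Prec (fun t => |g t|) (fun t => |f t| * Real.log t ^ m))
    (h4 : Ll (fun t => |Real.log (|f t|)|) log2) :
    Prec (fun t => |deriv f t / f t| / log2 t ^ 2) (fun t => |deriv g t / g t|) ∧
      Prec (fun t => |deriv g t / g t|) (fun t => |deriv f t / f t| * log2 t ^ 2) := by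
  obtain ⟨C, hC, t₀, -, hC_le⟩ := h4
  have hf0 : ∀ᶠ t in atTop, f t ≠ 0 := h2.eventually_ne_zero.mono fun _ h => abs_ne_zero.mp h.1
  have hg0 : ∀ᶠ t in atTop, g t ≠ 0 := h2.eventually_ne_zero.mono fun _ h => abs_ne_zero.mp h.2
  have hu := HardyField.div_mem (𝓗.deriv_mem f hf) hf hf0
  have hv := HardyField.div_mem (𝓗.deriv_mem g hg) hg hg0
  have hG := HardyField.eventually_hasDerivAt_log hf hf0
  have hF := HardyField.eventually_hasDerivAt_log hg hg0
  have hGtop := tendsto_abs_log_atTop h1f hf0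
  have hFtop := tendsto_abs_log_atTop h1g hg0
  have hGle : ∀ᶠ t in atTop, |log (f t)| ≤ C * log2 t :=
    (eventually_ge_atTop t₀).mono fun t ht => by simpa only [log_abs] using hC_le t ht
  have hFle := eventually_abs_log_le_of_prec h2 h3 hGle
  constructor
  · simpa only [Prec, Pi.div_apply, div_div_eq_mul_div] using
      tendsto_abs_mul_log2_sq_div_abs hC.le hu hv hG hF hGtop hFtop hGle
  · simpa only [Prec, Pi.div_apply] using
      tendsto_abs_mul_log2_sq_div_abs (by positivity) hv hu hF hG hFtop hGtop hFle
end
end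

section
/- (Kusmin–Landau inequality.) There is an absolute constant C > 0 such that the following holds. Suppose I ⊂ ℝ is a bounded interval, f : I → ℝ is continuously differentiable with f' monotone on I, and there exists λ > 0 such that λ < |f'(t)| < 1 − λ for all t ∈ I. Then |Σ_{n ∈ I ∩ ℤ} e(f(n))| ≤ C·λ^{−1}. -/
open Filter Real
open scoped Classical

noncomputable section

/-!
Write `u k = e (x k)` with steps `x (k + 1) - x k = g k`; by the mean value theorem the steps
are values of `f'`, so after conjugating they lie in `[λ, 1 - λ]` and are monotone in `k`.
Since `1 / (e g - 1) = -(1 + i cot (π g)) / 2`, each term is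
`u k = -(1 + i cot (π g k)) / 2 * (u (k + 1) - u k)`, and summation by parts moves the
differences onto the coefficients `cot (π g k)`. These are monotone in `k`, hence of total
variation at most `2 max |cot (π g k)|`, and `sin (π g) ≥ 2λ` bounds them by `1 / (2λ)`.
-/

open Finset

lemma norm_e (x : ℝ) : ‖e x‖ = 1 := by
  rw [e, Complex.norm_exp]
  simp

lemma e_add (x y : ℝ) : e (x + y) = e x * e y := by
  rw [e, e, e, ← Complex.exp_add]
  push_cast
  ring_nf

lemma e_neg (x : ℝ) : e (-x) = starRingEnd ℂ (e x) := by
  rw [e, e, ← Complex.exp_conj]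
  simp [map_ofNat]

lemma e_sub_one_mul_eq_one {g : ℝ} (hg : Real.sin (π * g) ≠ 0) :
    (e g - 1) * (-(1 + Complex.I * Real.cot (π * g)) / 2) = 1 := by
  have hs : (Real.sin (π * g) : ℂ) ≠ 0 := by exact_mod_cast hg
  have hsq : (Real.sin (π * g) : ℂ) ^ 2 + (Real.cos (π * g) : ℂ) ^ 2 = 1 := by
    exact_mod_cast Real.sin_sq_add_cos_sq (π * g)
  have he : e g = ((Real.cos (π * g) : ℂ) + Real.sin (π * g) * Complex.I) ^ 2 := by
    rw [e, Complex.ofReal_cos, Complex.ofReal_sin, ← Complex.exp_mul_I, ← Complex.exp_nat_mul]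
    push_cast
    ring_nf
  rw [he, Real.cot_eq_cos_div_sin, Complex.ofReal_div]
  generalize (Real.sin (π * g) : ℂ) = s at hs hsq ⊢
  generalize (Real.cos (π * g) : ℂ) = c at hsq ⊢
  field_simp
  linear_combination (s - c * Complex.I) * hsq
    - (2 * c ^ 2 * s + s ^ 3 + c * s ^ 2 * Complex.I) * Complex.I_sq

lemma sin_pi_mul_pos {g : ℝ} (hg0 : 0 < g) (hg1 : g < 1) : 0 < Real.sin (π * g) :=
  Real.sin_pos_of_pos_of_lt_pi (by positivity) (by nlinarith [Real.pi_pos])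

lemma e_eq_mul_e_add_sub {x g : ℝ} (hg0 : 0 < g) (hg1 : g < 1) :
    e x = -(1 + Complex.I * Real.cot (π * g)) / 2 * (e (x + g) - e x) := by
  rw [e_add]
  linear_combination (-e x) * e_sub_one_mul_eq_one (sin_pi_mul_pos hg0 hg1).ne'

lemma two_mul_min_le_sin_pi_mul {g : ℝ} (h0 : 0 ≤ g) (h1 : g ≤ 1) :
    2 * min g (1 - g) ≤ Real.sin (π * g) := by
  have jordan {y : ℝ} (hy0 : 0 ≤ y) (hy1 : y ≤ 1 / 2) : 2 * y ≤ Real.sin (π * y) := by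
    have := Real.mul_le_sin (x := π * y) (by positivity) (by nlinarith [Real.pi_pos])
    rwa [← mul_assoc, div_mul_cancel₀ _ Real.pi_ne_zero] at this
  rcases le_total g (1 / 2) with hg | hg
  · exact (mul_le_mul_of_nonneg_left (min_le_left _ _) zero_le_two).trans (jordan h0 hg)
  · rw [show π * g = π - π * (1 - g) by ring, Real.sin_pi_sub]
    exact (mul_le_mul_of_nonneg_left (min_le_right _ _) zero_le_two).trans
      (jordan (by linarith) (by linarith))

lemma abs_cot_pi_mul_le {lam g : ℝ} (hlam : 0 < lam) (h0 : lam ≤ g) (h1 : g ≤ 1 - lam) :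
    |Real.cot (π * g)| ≤ 1 / (2 * lam) := by
  have hsin : 2 * lam ≤ Real.sin (π * g) :=
    (mul_le_mul_of_nonneg_left (le_min h0 (by linarith)) zero_le_two).trans
      (two_mul_min_le_sin_pi_mul (by linarith) (by linarith))
  rw [Real.cot_eq_cos_div_sin, abs_div, abs_of_pos (a := Real.sin _) (by linarith)]
  exact div_le_div₀ zero_le_one (Real.abs_cos_le_one _) (by positivity) hsin

lemma antitoneOn_cot_pi_mul : AntitoneOn (fun g => Real.cot (π * g)) (Set.Ioo 0 1) := by
  intro a ha b hb hab
  have hsub : 0 ≤ Real.sin (π * b - π * a) := Real.sin_nonneg_of_nonneg_of_le_pi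
    (by nlinarith [Real.pi_pos]) (by nlinarith [ha.1, hb.2, Real.pi_pos])
  rw [Real.sin_sub] at hsub
  simp only [Real.cot_eq_cos_div_sin]
  rw [div_le_div_iff₀ (sin_pi_mul_pos hb.1 hb.2) (sin_pi_mul_pos ha.1 ha.2)]
  linarith

lemma sum_range_abs_sub_of_monotoneOn {c : ℕ → ℝ} {n : ℕ} (hc : MonotoneOn c (Set.Iic n)) :
    ∑ k ∈ range n, |c (k + 1) - c k| = c n - c 0 := by
  rw [← sum_range_sub]
  refine sum_congr rfl fun k hk => ?_
  have hk := mem_range.1 hk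
  exact abs_of_nonneg (sub_nonneg.2 (hc (Set.mem_Iic.2 hk.le) (Set.mem_Iic.2 hk) k.le_succ))

lemma sum_range_abs_sub_eq_abs {c : ℕ → ℝ} {n : ℕ}
    (hc : MonotoneOn c (Set.Iic n) ∨ AntitoneOn c (Set.Iic n)) :
    ∑ k ∈ range n, |c (k + 1) - c k| = |c n - c 0| := by
  have h0n : (0 : ℕ) ∈ Set.Iic n := Nat.zero_le n
  have hnn : n ∈ Set.Iic n := Set.mem_Iic.2 le_rfl
  rcases hc with hc | hc
  · rw [sum_range_abs_sub_of_monotoneOn hc, abs_of_nonneg (sub_nonneg.2 (hc h0n hnn n.zero_le))]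
  · rw [abs_of_nonpos (sub_nonpos.2 (hc h0n hnn n.zero_le)), neg_sub,
      ← neg_sub_neg, ← sum_range_abs_sub_of_monotoneOn hc.neg]
    refine sum_congr rfl fun k _ => ?_
    rw [neg_sub_neg, abs_sub_comm]

lemma norm_sum_range_succ_smul_le {E : Type*} [SeminormedAddCommGroup E] [NormedSpace ℝ E]
    {c : ℕ → ℝ} {u : ℕ → E} {n : ℕ} {B : ℝ}
    (hc : MonotoneOn c (Set.Iic n) ∨ AntitoneOn c (Set.Iic n))
    (hu : ∀ k ≤ n + 1, ‖∑ i ∈ range k, u i‖ ≤ B) :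
    ‖∑ k ∈ range (n + 1), c k • u k‖ ≤ B * (|c n| + |c n - c 0|) := by
  rw [sum_range_by_parts, Nat.add_sub_cancel]
  have hvar :
      ‖∑ k ∈ range n, (c (k + 1) - c k) • ∑ i ∈ range (k + 1), u i‖ ≤ B * |c n - c 0| := by
    rw [← sum_range_abs_sub_eq_abs hc, mul_sum]
    refine (norm_sum_le _ _).trans (sum_le_sum fun k hk => ?_)
    rw [norm_smul, Real.norm_eq_abs, mul_comm]
    exact mul_le_mul_of_nonneg_right (hu _ (by have := mem_range.1 hk; omega)) (abs_nonneg _)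
  calc _ ≤ ‖c n • ∑ i ∈ range (n + 1), u i‖ + B * |c n - c 0| :=
        (norm_sub_le _ _).trans (by gcongr)
    _ ≤ B * (|c n| + |c n - c 0|) := by
      rw [norm_smul, Real.norm_eq_abs, mul_add, mul_comm]
      have := mul_le_mul_of_nonneg_left (hu _ le_rfl) (abs_nonneg (c n))
      linarith

lemma norm_sum_cot_smul_e_sub_le {x g : ℕ → ℝ} {m : ℕ} {lam : ℝ} (hlam : 0 < lam)
    (hg : ∀ k ≤ m, lam ≤ g k ∧ g k ≤ 1 - lam)
    (hmono : MonotoneOn g (Set.Iic m) ∨ AntitoneOn g (Set.Iic m)) :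
    ‖∑ k ∈ range (m + 1), Real.cot (π * g k) • (e (x (k + 1)) - e (x k))‖ ≤ 3 / lam := by
  set c : ℕ → ℝ := fun k => Real.cot (π * g k)
  have hc_mono : MonotoneOn c (Set.Iic m) ∨ AntitoneOn c (Set.Iic m) := by
    have hmaps : Set.MapsTo g (Set.Iic m) (Set.Ioo 0 1) := fun k hk =>
      ⟨by linarith [(hg k hk).1], by linarith [(hg k hk).2]⟩
    exact hmono.symm.imp (antitoneOn_cot_pi_mul.comp · hmaps)
      (antitoneOn_cot_pi_mul.comp_MonotoneOn · hmaps)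
  have hc_bound : ∀ k ≤ m, |c k| ≤ 1 / (2 * lam) := fun k hk =>
    abs_cot_pi_mul_le hlam (hg k hk).1 (hg k hk).2
  have hpartial : ∀ k ≤ m + 1, ‖∑ i ∈ range k, (e (x (i + 1)) - e (x i))‖ ≤ 2 := fun k _ => by
    rw [sum_range_sub (fun k => e (x k))]
    exact (norm_sub_le _ _).trans (by rw [norm_e, norm_e]; norm_num)
  calc _ ≤ 2 * (|c m| + |c m - c 0|) := norm_sum_range_succ_smul_le hc_mono hpartial
    _ ≤ 2 * (2 * |c m| + |c 0|) := by linarith [abs_sub (c m) (c 0)]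
    _ ≤ 2 * (2 * (1 / (2 * lam)) + 1 / (2 * lam)) := by
      gcongr
      exacts [hc_bound m le_rfl, hc_bound 0 m.zero_le]
    _ = 3 / lam := by field_simp; ring

lemma norm_sum_range_succ_e_le {x g : ℕ → ℝ} {n : ℕ} {lam : ℝ} (hlam : 0 < lam)
    (hx : ∀ k < n, x (k + 1) = x k + g k)
    (hg : ∀ k < n, lam ≤ g k ∧ g k ≤ 1 - lam)
    (hmono : MonotoneOn g (Set.Iio n) ∨ AntitoneOn g (Set.Iio n)) :
    ‖∑ k ∈ range (n + 1), e (x k)‖ ≤ 1 + 3 / (2 * lam) := by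
  rcases n with _ | m
  · simp only [zero_add, sum_range_one, norm_e, le_add_iff_nonneg_right]
    positivity
  rw [Set.Iio_add_one_eq_Iic] at hmono
  have habel := norm_sum_cot_smul_e_sub_le (x := x) hlam
    (fun k hk => hg k (Nat.lt_succ_of_le hk)) hmono
  set c : ℕ → ℝ := fun k => Real.cot (π * g k) with hc
  set d : ℕ → ℂ := fun k => e (x (k + 1)) - e (x k) with hd
  have hterm : ∀ k ∈ range (m + 1), e (x k) = -(1 / 2) * d k - Complex.I / 2 * (c k • d k) := by
    intro k hk
    have hk := mem_range.1 hk
    rw [e_eq_mul_e_add_sub (x := x k) (g := g k) (by linarith [(hg k hk).1])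
      (by linarith [(hg k hk).2]), ← hx k hk]
    simp only [hc, hd, Complex.real_smul]
    ring
  have hsum : ∑ k ∈ range (m + 2), e (x k)
      = (e (x (m + 1)) + e (x 0)) / 2 - Complex.I / 2 * ∑ k ∈ range (m + 1), c k • d k := by
    rw [sum_range_succ, sum_congr rfl hterm, sum_sub_distrib, ← mul_sum, ← mul_sum,
      sum_range_sub (fun k => e (x k))]
    ring
  rw [hsum]
  calc _ ≤ ‖(e (x (m + 1)) + e (x 0)) / 2‖ + ‖Complex.I / 2 * ∑ k ∈ range (m + 1), c k • d k‖ :=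
        norm_sub_le _ _
    _ ≤ 1 + 1 / 2 * (3 / lam) := by
      gcongr
      · rw [norm_div, Complex.norm_two, div_le_one two_pos]
        exact (norm_add_le _ _).trans (by rw [norm_e, norm_e]; norm_num)
      · rw [norm_mul, norm_div, Complex.norm_I, Complex.norm_two]
        gcongr
    _ = 1 + 3 / (2 * lam) := by ring

lemma norm_sum_range_succ_e_le_of_abs {x g : ℕ → ℝ} {n : ℕ} {lam : ℝ} (hlam : 0 < lam)
    (hx : ∀ k < n, x (k + 1) = x k + g k)
    (hg : ∀ k < n, lam ≤ |g k| ∧ |g k| ≤ 1 - lam)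
    (hsign : (∀ k < n, 0 < g k) ∨ (∀ k < n, g k < 0))
    (hmono : MonotoneOn g (Set.Iio n) ∨ AntitoneOn g (Set.Iio n)) :
    ‖∑ k ∈ range (n + 1), e (x k)‖ ≤ 1 + 3 / (2 * lam) := by
  rcases hsign with hpos | hneg
  · refine norm_sum_range_succ_e_le hlam hx (fun k hk => ?_) hmono
    rw [← abs_of_pos (hpos k hk)]
    exact hg k hk
  · have hconj :
        ∑ k ∈ range (n + 1), e (x k) = starRingEnd ℂ (∑ k ∈ range (n + 1), e (-x k)) := by
      simp only [map_sum, e_neg, Complex.conj_conj]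
    rw [hconj, Complex.norm_conj]
    refine norm_sum_range_succ_e_le (g := -g) hlam (fun k hk => ?_) (fun k hk => ?_)
      (hmono.symm.imp AntitoneOn.neg MonotoneOn.neg)
    · simp only [hx k hk, Pi.neg_apply, neg_add]
    · rw [Pi.neg_apply, ← abs_of_neg (hneg k hk)]
      exact hg k hk

lemma IsPreconnected.forall_pos_or_forall_neg {s : Set ℝ} {f : ℝ → ℝ} (hs : IsPreconnected s)
    (hf : ContinuousOn f s) (hf0 : ∀ t ∈ s, f t ≠ 0) :
    (∀ t ∈ s, 0 < f t) ∨ (∀ t ∈ s, f t < 0) := by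
  by_contra! ⟨⟨t, ht, hft⟩, ⟨t', ht', hft'⟩⟩
  obtain ⟨y, hy, hfy⟩ := hs.intermediate_value ht ht' hf ⟨hft, hft'⟩
  exact hf0 y hy hfy

lemma Int.sum_Icc_add_natCast {M : Type*} [AddCommMonoid M] (F : ℤ → M) (m : ℤ) (n : ℕ) :
    ∑ k ∈ Icc m (m + n), F k = ∑ k ∈ Finset.range (n + 1), F (m + k) := by
  rw [Int.Icc_eq_finset_map, sum_map, show (m + n + 1 - m).toNat = n + 1 by omega]
  rfl

lemma norm_sum_range_succ_e_le_of_deriv {f : ℝ → ℝ} {a b x₀ lam : ℝ} {n : ℕ}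
    (hf : ContDiffOn ℝ 1 f (Set.Icc a b))
    (hmono : MonotoneOn (deriv f) (Set.Ioo a b) ∨ AntitoneOn (deriv f) (Set.Ioo a b))
    (hlam : 0 < lam) (hbound : ∀ t ∈ Set.Ioo a b, lam ≤ |deriv f t| ∧ |deriv f t| ≤ 1 - lam)
    (ha : a ≤ x₀) (hb : x₀ + n ≤ b) :
    ‖∑ k ∈ range (n + 1), e (f (x₀ + k))‖ ≤ 1 + 3 / (2 * lam) := by
  have hmvt : ∀ k : ℕ, ∃ c, k < n → c ∈ Set.Ioo (x₀ + k) (x₀ + k + 1) ∧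
      f (x₀ + ↑(k + 1)) = f (x₀ + k) + deriv f c := by
    intro k
    by_cases hk : k < n
    · have hkn : (k : ℝ) + 1 ≤ n := by exact_mod_cast hk
      have hsub : Set.Icc (x₀ + k) (x₀ + k + 1) ⊆ Set.Icc a b :=
        Set.Icc_subset_Icc (by linarith [k.cast_nonneg (α := ℝ)]) (by linarith)
      obtain ⟨c, hc, hslope⟩ := exists_deriv_eq_slope f (lt_add_one _) (hf.continuousOn.mono hsub)
        ((hf.differentiableOn one_ne_zero).mono (Set.Ioo_subset_Icc_self.trans hsub))
      refine ⟨c, fun _ => ⟨hc, ?_⟩⟩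
      rw [hslope, add_sub_cancel_left, div_one, Nat.cast_succ, ← add_assoc]
      ring
    · exact ⟨0, fun h => absurd h hk⟩
  choose c hc using hmvt
  have hc_maps : Set.MapsTo c (Set.Iio n) (Set.Ioo a b) := fun k hk => by
    have hkn : (k : ℝ) + 1 ≤ n := by exact_mod_cast (hk : k < n)
    exact ⟨by linarith [(hc k hk).1.1, k.cast_nonneg (α := ℝ)], by linarith [(hc k hk).1.2]⟩
  have hc_mono : MonotoneOn c (Set.Iio n) := fun j hj k hk hjk => by
    rcases hjk.eq_or_lt with rfl | hlt
    · rfl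
    have : (j : ℝ) + 1 ≤ k := by exact_mod_cast hlt
    linarith [(hc j hj).1.2, (hc k hk).1.1]
  have hsign : (∀ t ∈ Set.Ioo a b, 0 < deriv f t) ∨ (∀ t ∈ Set.Ioo a b, deriv f t < 0) :=
    isPreconnected_Ioo.forall_pos_or_forall_neg
      ((hf.mono Set.Ioo_subset_Icc_self).continuousOn_deriv_of_isOpen isOpen_Ioo le_rfl)
      fun t ht h => hlam.not_ge (by simpa [h] using (hbound t ht).1)
  refine norm_sum_range_succ_e_le_of_abs (g := fun k => deriv f (c k)) hlam
    (fun k hk => (hc k hk).2) (fun k hk => hbound _ (hc_maps hk))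
    (hsign.imp (fun h k hk => h _ (hc_maps hk)) (fun h k hk => h _ (hc_maps hk)))
    (hmono.imp (fun h => h.comp hc_mono hc_maps) (fun h => h.comp_MonotoneOn hc_mono hc_maps))

/-- Kusmin–Landau: there is an absolute constant `C > 0` such that for any
bounded interval `[a,b]`, any `C¹` function `f` on `[a,b]` with `f'` monotone and
`λ < |f'(t)| < 1 - λ` on `[a,b]`, one has `|∑_{n ∈ [a,b] ∩ ℤ} e(f(n))| ≤ C·λ⁻¹`. -/
theorem stmt_7 :
    ∃ C : ℝ, 0 < C ∧ ∀ (a b : ℝ) (f : ℝ → ℝ) (lam : ℝ), a ≤ b →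
      ContDiffOn ℝ 1 f (Set.Icc a b) →
      (MonotoneOn (deriv f) (Set.Icc a b) ∨ AntitoneOn (deriv f) (Set.Icc a b)) →
      0 < lam →
      (∀ t ∈ Set.Icc a b, lam < |deriv f t| ∧ |deriv f t| < 1 - lam) →
      ‖∑ n ∈ Finset.Icc ⌈a⌉ ⌊b⌋, e (f n)‖ ≤ C / lam := by
  refine ⟨2, two_pos, fun a b f lam hab hf hmono hlam hbound => ?_⟩
  have hlam_half : 2 * lam < 1 := by
    linarith [hbound a ⟨le_rfl, hab⟩, abs_nonneg (deriv f a)]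
  rcases lt_or_ge ⌊b⌋ ⌈a⌉ with hempty | hle
  · rw [Finset.Icc_eq_empty_of_lt hempty, sum_empty, norm_zero]
    positivity
  obtain ⟨n, hn⟩ := Int.eq_ofNat_of_zero_le (sub_nonneg.2 hle)
  have hN : ⌊b⌋ = ⌈a⌉ + n := by omega
  have hb : (⌈a⌉ : ℝ) + n ≤ b := by exact_mod_cast hN ▸ Int.floor_le b
  rw [hN, Int.sum_Icc_add_natCast]
  push_cast
  calc _ ≤ 1 + 3 / (2 * lam) := norm_sum_range_succ_e_le_of_deriv hf
        (hmono.imp (·.mono Set.Ioo_subset_Icc_self) (·.mono Set.Ioo_subset_Icc_self)) hlam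
        (fun t ht => (hbound t (Set.Ioo_subset_Icc_self ht)).imp le_of_lt le_of_lt)
        (Int.le_ceil a) hb
    _ ≤ 1 / (2 * lam) + 3 / (2 * lam) := by
      gcongr
      rw [le_div_iff₀ (by positivity)]
      linarith
    _ = 2 / lam := by field_simp; norm_num

end
end
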